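/- arXiv:2501.11106 — 3 statements merged into one kernel-verified Lean document; each statement's English description precedes it below -/
import Mathlib

section
/- Let Ω ⊆ ℝⁿ be open and f : Ω → ℝⁿ be continuous, approximately differentiable almost everywhere, and satisfy the Lusin condition (N). Then for every Lebesgue measurable set A ⊆ Ω, ∫_A |J_a f(x)| dx ≥ |f(A)|, where J_a f is the approximate Jacobian. -/
open MeasureTheory Metric Filter Topology Set
open scoped ENNReal NNReal Topology

noncomputable section

abbrev Em (n : ℕ) : Type := EuclideanSpace ℝ (Fin n)

variable {n : ℕ}

/-- `f` is approximately differentiable at `x` with approximate derivative `L`: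
there is a measurable set `S` of density `1` at `x` along which the difference
quotient tends to zero. -/
def HasApproxDerivAt (f : Em n → Em n) (L : Em n →L[ℝ] Em n) (x : Em n) : Prop :=
  ∃ S : Set (Em n), MeasurableSet S ∧
    Tendsto (fun r : ℝ => volume (S ∩ Metric.ball x r) / volume (Metric.ball x r))
      (𝓝[>] (0 : ℝ)) (𝓝 1) ∧
    Tendsto (fun y => ‖f y - f x - L (y - x)‖ / ‖y - x‖) (𝓝[S \ {x}] x) (𝓝 0)

/-- Regular approximate differentiability. -/
def HasRegularApproxDerivAt (f : Em n → Em n) (L : Em n →L[ℝ] Em n) (x : Em n) : Prop :=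
  HasApproxDerivAt f L x ∧
  ∃ r : ℕ → ℝ, (∀ j, 0 < r j) ∧ Tendsto r atTop (𝓝 (0 : ℝ)) ∧
    Tendsto (fun j => ⨆ h : {h : Em n // ‖h‖ = 1},
        ‖f (x + r j • (h : Em n)) - f x - r j • L (h : Em n)‖ / r j)
      atTop (𝓝 (0 : ℝ))

/-- Lusin condition (N) on a set `A`: images of null subsets of `A` are null. -/
def LusinN (f : Em n → Em n) (A : Set (Em n)) : Prop :=
  ∀ E ⊆ A, volume E = 0 → volume (f '' E) = 0

/-- `f` is injective a.e. on `Ω`: injective off a null set. -/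
def InjectiveAE (f : Em n → Em n) (Ω : Set (Em n)) : Prop :=
  ∃ N ⊆ Ω, volume N = 0 ∧ Set.InjOn f (Ω \ N)

/-- `f` is a homeomorphism of `Ω` onto its image. -/
def IsHomeoOnto (f : Em n → Em n) (Ω : Set (Em n)) : Prop :=
  Topology.IsEmbedding (fun x : Ω => f x)

/-- `Df` is the weak (distributional) derivative of `f` on the open set `Ω`. -/
def HasWeakDerivOn (f : Em n → Em n) (Df : Em n → Em n →L[ℝ] Em n) (Ω : Set (Em n)) : Prop :=
  LocallyIntegrableOn f Ω volume ∧ LocallyIntegrableOn Df Ω volume ∧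
  ∀ φ : Em n → ℝ, ContDiff ℝ (⊤ : ℕ∞) φ → HasCompactSupport φ → tsupport φ ⊆ Ω →
    ∀ v : Em n, ∫ x in Ω, fderiv ℝ φ x v • f x = - ∫ x in Ω, φ x • Df x v

/-- Convergence `f k → g` in `W^{1,p}_loc(Ω)`. -/
def TendstoW1pLocOn (p : ℝ) (f : ℕ → Em n → Em n) (Df : ℕ → Em n → Em n →L[ℝ] Em n)
    (g : Em n → Em n) (Dg : Em n → Em n →L[ℝ] Em n) (Ω : Set (Em n)) : Prop :=
  ∀ K ⊆ Ω, IsCompact K →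
    Tendsto (fun k => ∫⁻ x in K,
        (‖f k x - g x‖₊ : ℝ≥0∞) ^ p + (‖Df k x - Dg x‖₊ : ℝ≥0∞) ^ p) atTop (𝓝 0)

/-- Sign of a real number, as an integer. -/
def rsgn (t : ℝ) : ℤ := if 0 < t then 1 else if t < 0 then -1 else 0



section AuxStmt4

set_option maxHeartbeats 1000000

lemma diff_meas_le {B S : Set (Em n)} (hS : MeasurableSet S) (hB : volume B ≠ ∞) {θ : ℝ≥0∞}
    (h : (1 - θ) * volume B ≤ volume (B ∩ S)) : volume (B \ S) ≤ θ * volume B := by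
  rcases le_or_gt 1 θ with hθ | hθ
  · calc volume (B \ S) ≤ volume B := measure_mono diff_subset
      _ = 1 * volume B := (one_mul _).symm
      _ ≤ θ * volume B := by gcongr
  · have h2 : volume (B ∩ S) + volume (B \ S) = volume B := measure_inter_add_diff B hS
    have hfin : (1 - θ) * volume B ≠ ∞ :=
      ENNReal.mul_ne_top (ne_top_of_le_ne_top ENNReal.one_ne_top tsub_le_self) hB
    have key : (1 - θ) * volume B + volume (B \ S) ≤ (1 - θ) * volume B + θ * volume B := by
      calc (1 - θ) * volume B + volume (B \ S) ≤ volume (B ∩ S) + volume (B \ S) := by gcongr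
        _ = volume B := h2
        _ = ((1 - θ) + θ) * volume B := by rw [tsub_add_cancel_of_le hθ.le, one_mul]
        _ = (1 - θ) * volume B + θ * volume B := by rw [add_mul]
    exact (ENNReal.add_le_add_iff_left hfin).1 key

lemma nonempty_inter_of_diff_lt {B S : Set (Em n)} (h : volume (B \ S) < volume B) :
    (B ∩ S).Nonempty := by
  rcases (B ∩ S).eq_empty_or_nonempty with he | hn
  · have : B \ S = B := by
      ext z; simp only [mem_diff, and_iff_left_iff_imp]
      intro hz hzS
      exact (eq_empty_iff_forall_notMem.1 he z) ⟨hz, hzS⟩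
    rw [this] at h; exact absurd h (lt_irrefl _)
  · exact hn


def goodSet (f : Em n → Em n) (Df : Em n → Em n →L[ℝ] Em n) (k N : ℕ) (c : Em n) :
    Set (Em n) :=
  {x | x ∈ Metric.ball c (1 / (4 * (N + 1))) ∧ ‖Df x‖ ≤ k ∧
    ∃ S : Set (Em n), MeasurableSet S ∧
      (∀ y ∈ S, ‖f y - f x - Df x (y - x)‖ ≤ ‖y - x‖) ∧
      (∀ r : ℝ, 0 < r → r ≤ 1 / (N + 1) →
        volume (Metric.ball x r \ S) ≤ volume (Metric.ball x r) / 2 ^ (n + 2))}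

lemma mem_goodSet_of_approx {f : Em n → Em n} {Df : Em n → Em n →L[ℝ] Em n} {x : Em n}
    (hx : HasApproxDerivAt f (Df x) x) {u : ℕ → Em n} (hu : DenseRange u) :
    ∃ k N j : ℕ, x ∈ goodSet f Df k N (u j) := by
  obtain ⟨S₀, hS₀m, hdens, hquot⟩ := hx
  set θ : ℝ≥0∞ := ((2 : ℝ≥0∞) ^ (n + 2))⁻¹ with hθdef
  have hθ0 : θ ≠ 0 := by
    rw [hθdef]
    simp [ENNReal.inv_ne_zero, ENNReal.pow_ne_top ENNReal.ofNat_ne_top]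
  have h1 : (1 : ℝ≥0∞) - θ < 1 :=
    ENNReal.sub_lt_self ENNReal.one_ne_top one_ne_zero hθ0
  have hev : ∀ᶠ r in 𝓝[>] (0 : ℝ),
      1 - θ < volume (S₀ ∩ Metric.ball x r) / volume (Metric.ball x r) :=
    hdens.eventually (lt_mem_nhds h1)
  obtain ⟨ε, hε, hsub⟩ := mem_nhdsGT_iff_exists_Ioo_subset.1 hev
  rw [mem_Ioi] at hε
  have hq : ∀ᶠ y in 𝓝[S₀ \ {x}] x, ‖f y - f x - Df x (y - x)‖ / ‖y - x‖ < 1 :=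
    hquot.eventually (gt_mem_nhds one_pos)
  obtain ⟨ρ, hρ, hball⟩ := Metric.mem_nhdsWithin_iff.1 hq
  obtain ⟨N, hNN⟩ := exists_nat_one_div_lt (lt_min hε hρ)
  obtain ⟨j, hj⟩ := hu.exists_dist_lt x (by positivity : (0:ℝ) < 1 / (4 * (N + 1)))
  refine ⟨⌈‖Df x‖⌉₊, N, j, ?_, ?_, ?_⟩
  · rw [mem_ball]; exact hj
  · exact Nat.le_ceil _
  · refine ⟨(S₀ ∩ Metric.ball x ρ) ∪ {x},
      ((hS₀m.inter measurableSet_ball).union (measurableSet_singleton x)), ?_, ?_⟩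
    · rintro y (⟨hyS, hyb⟩ | hyx)
      · rcases eq_or_ne y x with rfl | hne
        · simp
        · have : y ∈ Metric.ball x ρ ∩ (S₀ \ {x}) := ⟨hyb, hyS, hne⟩
          have hlt := hball this
          have hpos : (0:ℝ) < ‖y - x‖ := by
            rw [norm_pos_iff]; exact sub_ne_zero.2 hne
          exact le_of_lt ((div_lt_one hpos).1 hlt)
      · rcases hyx with rfl
        simp
    · intro r hr0 hrN
      have hrm : r < min ε ρ := lt_of_le_of_lt hrN hNN
      have hrε : r < ε := hrm.trans_le (min_le_left _ _)
      have hrρ : r ≤ ρ := (hrm.trans_le (min_le_right _ _)).le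
      have hratio := hsub ⟨hr0, hrε⟩
      set B := Metric.ball x r with hB
      have hBne : volume B ≠ 0 := (measure_ball_pos volume x hr0).ne'
      have hBfin : volume B ≠ ∞ := measure_ball_lt_top.ne
      have hm : (1 - θ) * volume B ≤ volume (S₀ ∩ B) :=
        (ENNReal.le_div_iff_mul_le (Or.inl hBne) (Or.inl hBfin)).1 hratio.le
      have hsubset : S₀ ∩ B ⊆ B ∩ ((S₀ ∩ Metric.ball x ρ) ∪ {x}) := by
        rintro z ⟨hz1, hz2⟩
        exact ⟨hz2, Or.inl ⟨hz1, Metric.ball_subset_ball hrρ hz2⟩⟩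
      have := diff_meas_le
        (((hS₀m.inter measurableSet_ball).union (measurableSet_singleton x))) hBfin
        (le_trans hm (measure_mono hsubset))
      calc volume (B \ ((S₀ ∩ Metric.ball x ρ) ∪ {x})) ≤ θ * volume B := this
        _ = volume B / 2 ^ (n + 2) := by
          rw [ENNReal.div_eq_inv_mul]

lemma goodSet_lipschitz {f : Em n → Em n} {Df : Em n → Em n →L[ℝ] Em n} (k N : ℕ) (c : Em n) :
    LipschitzOnWith (3 * (k + 1) : ℝ≥0) f (goodSet f Df k N c) := by
  apply LipschitzOnWith.of_dist_le_mul
  intro x hx y hy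
  rcases eq_or_ne x y with rfl | hne
  · simp
  obtain ⟨hxc, hxk, Sx, hSxm, hSxe, hSxd⟩ := hx
  obtain ⟨hyc, hyk, Sy, hSym, hSye, hSyd⟩ := hy
  set d := dist x y with hd
  have hd0 : 0 < d := dist_pos.2 hne
  have hdlt : d < 1 / (2 * (N + 1)) := by
    have := dist_triangle_right x y c
    have h4 : (0:ℝ) < (N:ℝ) + 1 := by positivity
    rw [mem_ball] at hxc hyc
    calc d ≤ dist x c + dist y c := this
      _ < 1 / (4 * (N + 1)) + 1 / (4 * (N + 1)) := by gcongr
      _ = 1 / (2 * (N + 1)) := by field_simp; ring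
  have hdN : d ≤ 1 / ((N:ℝ) + 1) := by
    have h4 : (0:ℝ) < (N:ℝ) + 1 := by positivity
    have : 1 / (2 * ((N:ℝ) + 1)) ≤ 1 / ((N:ℝ) + 1) := by
      rw [div_le_div_iff₀ (by positivity) h4]; nlinarith
    exact hdlt.le.trans this
  have h2dN : 2 * d ≤ 1 / ((N:ℝ) + 1) := by
    have h4 : (0:ℝ) < (N:ℝ) + 1 := by positivity
    have : 2 * d < 2 * (1 / (2 * ((N:ℝ) + 1))) := by linarith
    calc 2 * d ≤ 2 * (1 / (2 * ((N:ℝ) + 1))) := this.le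
      _ = 1 / ((N:ℝ) + 1) := by field_simp
  set B := Metric.ball x d with hB
  have hBne : volume B ≠ 0 := (measure_ball_pos volume x hd0).ne'
  have hBfin : volume B ≠ ∞ := measure_ball_lt_top.ne
  have b1 : volume (B \ Sx) ≤ volume B / 2 ^ (n + 2) := hSxd d hd0 hdN
  have hBsub : B ⊆ Metric.ball y (2 * d) := by
    intro z hz
    rw [mem_ball] at hz ⊢
    calc dist z y ≤ dist z x + d := dist_triangle z x y
      _ < d + d := by linarith
      _ = 2 * d := by ring
  have hvol2 : volume (Metric.ball y (2 * d)) = 2 ^ n * volume B := by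
    rw [hB, Measure.addHaar_ball_of_pos volume x hd0,
      Measure.addHaar_ball_of_pos volume y (by linarith : (0:ℝ) < 2 * d),
      finrank_euclideanSpace_fin, mul_pow, ENNReal.ofReal_mul (by positivity), ← mul_assoc]
    congr 1
    rw [← ENNReal.ofReal_ofNat 2, ← ENNReal.ofReal_pow (by norm_num)]
  have b2 : volume (B \ Sy) ≤ volume B / 4 := by
    calc volume (B \ Sy) ≤ volume (Metric.ball y (2 * d) \ Sy) :=
          measure_mono (diff_subset_diff_left hBsub)
      _ ≤ volume (Metric.ball y (2 * d)) / 2 ^ (n + 2) :=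
          hSyd (2 * d) (by linarith) h2dN
      _ = 2 ^ n * volume B / (2 ^ n * 4) := by
          rw [hvol2]; congr 1
          rw [pow_add]; norm_num
      _ = volume B / 4 := ENNReal.mul_div_mul_left _ _ (by positivity) (by simp)
  have b1' : volume (B \ Sx) ≤ volume B / 4 := by
    refine b1.trans (ENNReal.div_le_div_left ?_ _)
    calc (4:ℝ≥0∞) = 2 ^ 2 := by norm_num
      _ ≤ 2 ^ (n + 2) := pow_le_pow_right₀ one_le_two (by omega)
  have b3 : volume (B \ (Sx ∩ Sy)) < volume B := by
    have hsplit : B \ (Sx ∩ Sy) = (B \ Sx) ∪ (B \ Sy) := diff_inter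
    calc volume (B \ (Sx ∩ Sy)) ≤ volume (B \ Sx) + volume (B \ Sy) := by
          rw [hsplit]; exact measure_union_le _ _
      _ ≤ volume B / 4 + volume B / 4 := add_le_add b1' b2
      _ = volume B / 2 := by
          rw [ENNReal.div_add_div_same]
          rw [← two_mul, show (4:ℝ≥0∞) = 2 * 2 by norm_num,
            ENNReal.mul_div_mul_left _ _ two_ne_zero ENNReal.ofNat_ne_top]
      _ < volume B := ENNReal.half_lt_self hBne hBfin
  obtain ⟨z, hzB, hzSx, hzSy⟩ := nonempty_inter_of_diff_lt b3
  have est : ∀ (w : Em n) (Sw : Set (Em n)) (hk : ‖Df w‖ ≤ k)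
      (he : ∀ y' ∈ Sw, ‖f y' - f w - Df w (y' - w)‖ ≤ ‖y' - w‖) (hz : z ∈ Sw),
      dist (f z) (f w) ≤ ((k:ℝ) + 1) * dist z w := by
    intro w Sw hk he hz
    have h1 := he z hz
    rw [dist_eq_norm, dist_eq_norm]
    calc ‖f z - f w‖ = ‖(f z - f w - Df w (z - w)) + Df w (z - w)‖ := by
          congr 1; abel
      _ ≤ ‖f z - f w - Df w (z - w)‖ + ‖Df w (z - w)‖ := norm_add_le _ _
      _ ≤ ‖z - w‖ + ‖Df w‖ * ‖z - w‖ := add_le_add h1 ((Df w).le_opNorm _)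
      _ ≤ ‖z - w‖ + (k:ℝ) * ‖z - w‖ := by
          have : (0:ℝ) ≤ ‖z - w‖ := norm_nonneg _
          nlinarith
      _ = ((k:ℝ) + 1) * ‖z - w‖ := by ring
  have hzx : dist z x < d := mem_ball.1 hzB
  have hzy : dist z y < 2 * d := mem_ball.1 (hBsub hzB)
  have e1 : dist (f z) (f x) ≤ ((k:ℝ) + 1) * d := by
    refine (est x Sx hxk hSxe hzSx).trans ?_
    have : (0:ℝ) ≤ (k:ℝ) + 1 := by positivity
    nlinarith
  have e2 : dist (f z) (f y) ≤ ((k:ℝ) + 1) * (2 * d) := by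
    refine (est y Sy hyk hSye hzSy).trans ?_
    have : (0:ℝ) ≤ (k:ℝ) + 1 := by positivity
    nlinarith
  calc dist (f x) (f y) ≤ dist (f x) (f z) + dist (f z) (f y) := dist_triangle _ _ _
    _ = dist (f z) (f x) + dist (f z) (f y) := by rw [dist_comm (f x) (f z)]
    _ ≤ ((k:ℝ) + 1) * d + ((k:ℝ) + 1) * (2 * d) := add_le_add e1 e2
    _ = 3 * ((k:ℝ) + 1) * d := by ring
    _ = ((3 * (k + 1) : ℝ≥0) : ℝ) * d := by push_cast; ring

lemma lipschitzOnWith_extend {f : Em n → Em n} {s : Set (Em n)} {K : ℝ≥0}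
    (hf : LipschitzOnWith K f s) :
    ∃ g : Em n → Em n, (∃ C : ℝ≥0, LipschitzWith C g) ∧ EqOn f g s := by
  set e := WithLp.equiv 2 (Fin n → ℝ) with he
  have h1 : LipschitzOnWith (1 * K) (⇑e ∘ f) s :=
    (PiLp.lipschitzWith_ofLp 2 (fun _ : Fin n => ℝ)).comp_lipschitzOnWith hf
  obtain ⟨G, hG, hGe⟩ := h1.extend_pi
  have hsymm : LipschitzWith ((Fintype.card (Fin n) : ℝ≥0) ^ (1 / (2:ℝ≥0∞)).toReal) ⇑e.symm :=
    PiLp.lipschitzWith_toLp 2 (fun _ : Fin n => ℝ)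
  refine ⟨⇑e.symm ∘ G, ⟨_, hsymm.comp hG⟩, fun x hx => ?_⟩
  have := hGe hx
  simp only [Function.comp_apply] at this ⊢
  rw [← this]
  exact (e.symm_apply_apply (f x)).symm

lemma approx_deriv_unique {f g : Em n → Em n} {L M : Em n →L[ℝ] Em n} {T : Set (Em n)} {x : Em n}
    (hx : HasApproxDerivAt f L x) (hT : MeasurableSet T) (hxT : x ∈ T)
    (hdens : Tendsto (fun r => volume (T ∩ closedBall x r) / volume (closedBall x r))
      (𝓝[>] (0 : ℝ)) (𝓝 1))
    (hg : HasFDerivAt g M x) (hfg : EqOn f g T) : L = M := by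
  obtain ⟨S, hSm, hSd, hSq⟩ := hx
  set P := L - M with hP
  suffices hPz : ∀ v : Em n, P v = 0 by
    refine ContinuousLinearMap.ext fun v => ?_
    have := hPz v
    rw [hP, ContinuousLinearMap.sub_apply, sub_eq_zero] at this
    exact this
  intro v
  rcases eq_or_ne v 0 with rfl | hv
  · simp
  have : Nontrivial (Em n) := ⟨⟨v, 0, hv⟩⟩
  set w : Em n := ‖v‖⁻¹ • v with hwdef
  have hvn : (0:ℝ) < ‖v‖ := norm_pos_iff.2 hv
  have hw : ‖w‖ = 1 := by
    rw [hwdef, norm_smul, norm_inv, norm_norm, inv_mul_cancel₀ hvn.ne']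
  suffices hPw : P w = 0 by
    have hsv : ‖v‖ • w = v := smul_inv_smul₀ hvn.ne' v
    calc P v = P (‖v‖ • w) := by rw [hsv]
      _ = ‖v‖ • P w := map_smul _ _ _
      _ = 0 := by rw [hPw, smul_zero]
  suffices hle : ∀ ε : ℝ, 0 < ε → ‖P w‖ ≤ ε by
    by_contra h
    have h0 : 0 < ‖P w‖ := norm_pos_iff.2 h
    have := hle (‖P w‖ / 2) (by positivity)
    linarith
  intro ε hε
  set η : ℝ := min (ε / (2 * (‖P‖ + 1))) (1/2) with hηdef
  have hP0 : (0:ℝ) ≤ ‖P‖ := norm_nonneg _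
  have hη0 : 0 < η := lt_min (by positivity) (by norm_num)
  have hη1 : η ≤ 1/2 := min_le_right _ _
  have hηP : ‖P‖ * η ≤ ε / 2 := by
    have h1 : η ≤ ε / (2 * (‖P‖ + 1)) := min_le_left _ _
    have h2 : ‖P‖ * η ≤ ‖P‖ * (ε / (2 * (‖P‖ + 1))) := by nlinarith
    have h3 : ‖P‖ * (ε / (2 * (‖P‖ + 1))) ≤ ε / 2 := by
      have h4 : (0:ℝ) < 2 * (‖P‖ + 1) := by positivity
      have h5 : ε / (2 * (‖P‖ + 1)) * (2 * (‖P‖ + 1)) = ε := div_mul_cancel₀ _ h4.ne'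
      have h6 : (0:ℝ) < ε / (2 * (‖P‖ + 1)) := by positivity
      nlinarith
    linarith
  -- quantitative f bound
  have hq : ∀ᶠ y in 𝓝[S \ {x}] x, ‖f y - f x - L (y - x)‖ / ‖y - x‖ < ε/8 :=
    hSq.eventually (gt_mem_nhds (by positivity))
  obtain ⟨ρ₁, hρ₁, hball₁⟩ := Metric.mem_nhdsWithin_iff.1 hq
  -- quantitative g bound
  have hg' : ∀ᶠ y in 𝓝 x, ‖g y - g x - M (y - x)‖ ≤ ε/8 * ‖y - x‖ :=
    Asymptotics.isLittleO_iff.1 hg.isLittleO (by positivity)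
  obtain ⟨ρ₂, hρ₂, hball₂⟩ := Metric.eventually_nhds_iff_ball.1 hg'
  -- density bounds
  set c : ℝ := η^n / (4 * (1 + 2*η)^n) with hcdef
  have hc0 : 0 < c := by positivity
  set θ : ℝ≥0∞ := ENNReal.ofReal c with hθdef
  have hθ0 : θ ≠ 0 := by
    simp only [hθdef, ne_eq, ENNReal.ofReal_eq_zero, not_le]
    exact hc0
  have h1θ : (1:ℝ≥0∞) - θ < 1 := ENNReal.sub_lt_self ENNReal.one_ne_top one_ne_zero hθ0
  obtain ⟨ε₁, hε₁, hsub₁⟩ := mem_nhdsGT_iff_exists_Ioo_subset.1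
    (hSd.eventually (lt_mem_nhds h1θ))
  rw [mem_Ioi] at hε₁
  obtain ⟨ε₂, hε₂, hsub₂⟩ := mem_nhdsGT_iff_exists_Ioo_subset.1
    (hdens.eventually (lt_mem_nhds h1θ))
  rw [mem_Ioi] at hε₂
  -- choose r
  set r : ℝ := min (min (ε₁ / (2 * (1 + 2*η))) (ε₂ / (2 * (1 + 2*η)))) (min (ρ₁/4) (ρ₂/4))
    with hrdef
  have hr0 : 0 < r := by
    refine lt_min (lt_min (by positivity) (by positivity)) (lt_min (by positivity) (by positivity))
  have hr1 : (1 + 2*η) * r < ε₁ := by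
    have h1 : r ≤ ε₁ / (2 * (1 + 2*η)) := le_trans (min_le_left _ _) (min_le_left _ _)
    have h2 : (0:ℝ) < 1 + 2*η := by linarith
    rw [le_div_iff₀ (by positivity)] at h1
    nlinarith
  have hr2 : (1 + η) * r < ε₂ := by
    have h1 : r ≤ ε₂ / (2 * (1 + 2*η)) := le_trans (min_le_left _ _) (min_le_right _ _)
    have h2 : (0:ℝ) < 1 + 2*η := by linarith
    rw [le_div_iff₀ (by positivity)] at h1
    nlinarith
  have hrρ₁ : 2 * r < ρ₁ := by
    have h1 : r ≤ ρ₁/4 := le_trans (min_le_right _ _) (min_le_left _ _)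
    linarith
  have hrρ₂ : 2 * r < ρ₂ := by
    have h1 : r ≤ ρ₂/4 := le_trans (min_le_right _ _) (min_le_right _ _)
    linarith
  -- the small ball
  set z₀ : Em n := x + r • w with hz₀
  have hz₀x : dist z₀ x = r := by
    rw [hz₀, dist_eq_norm, add_sub_cancel_left, norm_smul, hw, Real.norm_eq_abs,
      abs_of_pos hr0, mul_one]
  set B' := closedBall z₀ (η * r) with hB'
  have hBsub1 : B' ⊆ Metric.ball x ((1 + 2*η) * r) := by
    intro z hz
    rw [hB', mem_closedBall] at hz
    rw [mem_ball]
    calc dist z x ≤ dist z z₀ + dist z₀ x := dist_triangle _ _ _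
      _ ≤ η * r + r := by rw [hz₀x]; linarith
      _ < (1 + 2*η) * r := by nlinarith
  have hBsub2 : B' ⊆ closedBall x ((1 + η) * r) := by
    intro z hz
    rw [hB', mem_closedBall] at hz
    rw [mem_closedBall]
    calc dist z x ≤ dist z z₀ + dist z₀ x := dist_triangle _ _ _
      _ ≤ η * r + r := by rw [hz₀x]; linarith
      _ = (1 + η) * r := by ring
  set κ := volume (Metric.ball (0 : Em n) 1) with hκ
  have hκ0 : κ ≠ 0 := (measure_ball_pos volume 0 one_pos).ne'
  have hκt : κ ≠ ∞ := measure_ball_lt_top.ne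
  have hvB' : volume B' = ENNReal.ofReal ((η*r)^n) * κ := by
    rw [hB', Measure.addHaar_closedBall volume z₀ (by positivity), finrank_euclideanSpace_fin]
  -- S density at radius (1+2η)r
  have hS1 : volume (Metric.ball x ((1+2*η)*r) \ S) ≤ θ * ENNReal.ofReal (((1+2*η)*r)^n) * κ := by
    have hRpos : 0 < (1+2*η)*r := by positivity
    have hratio := hsub₁ ⟨hRpos, hr1⟩
    have hBne : volume (Metric.ball x ((1+2*η)*r)) ≠ 0 := (measure_ball_pos volume x hRpos).ne'
    have hBfin : volume (Metric.ball x ((1+2*η)*r)) ≠ ∞ := measure_ball_lt_top.ne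
    have hm := (ENNReal.le_div_iff_mul_le (Or.inl hBne) (Or.inl hBfin)).1 hratio.le
    have := diff_meas_le hSm hBfin (le_trans hm (measure_mono (fun z hz => ⟨hz.2, hz.1⟩)))
    rwa [Measure.addHaar_ball_of_pos volume x hRpos, finrank_euclideanSpace_fin, ← mul_assoc]
      at this
  -- T density at radius (1+η)r
  have hT1 : volume (closedBall x ((1+η)*r) \ T) ≤ θ * ENNReal.ofReal (((1+η)*r)^n) * κ := by
    have hRpos : 0 < (1+η)*r := by positivity
    have hratio := hsub₂ ⟨hRpos, hr2⟩
    have hBne : volume (closedBall x ((1+η)*r)) ≠ 0 := (measure_closedBall_pos volume x hRpos).ne'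
    have hBfin : volume (closedBall x ((1+η)*r)) ≠ ∞ := measure_closedBall_lt_top.ne
    have hm := (ENNReal.le_div_iff_mul_le (Or.inl hBne) (Or.inl hBfin)).1 hratio.le
    have := diff_meas_le hT hBfin (le_trans hm (measure_mono (fun z hz => ⟨hz.2, hz.1⟩)))
    rwa [Measure.addHaar_closedBall volume x hRpos.le, finrank_euclideanSpace_fin, ← mul_assoc]
      at this
  -- nonempty intersection
  have hmono : ENNReal.ofReal (((1+η)*r)^n) ≤ ENNReal.ofReal (((1+2*η)*r)^n) := by
    apply ENNReal.ofReal_le_ofReal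
    apply pow_le_pow_left₀ (by positivity)
    nlinarith
  have hT2 : volume (closedBall x ((1+η)*r) \ T) ≤ θ * ENNReal.ofReal (((1+2*η)*r)^n) * κ := by
    refine hT1.trans ?_
    exact mul_le_mul_left (mul_le_mul_right hmono θ) κ
  have hkey : volume (B' \ (S ∩ T)) < volume B' := by
    have hsplit : B' \ (S ∩ T) = (B' \ S) ∪ (B' \ T) := diff_inter
    have hb : volume (B' \ (S ∩ T)) ≤ ENNReal.ofReal ((η*r)^n / 2) * κ := by
      calc volume (B' \ (S ∩ T)) ≤ volume (B' \ S) + volume (B' \ T) := by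
            rw [hsplit]; exact measure_union_le _ _
        _ ≤ volume (Metric.ball x ((1+2*η)*r) \ S) + volume (closedBall x ((1+η)*r) \ T) := by
            exact add_le_add (measure_mono (diff_subset_diff_left hBsub1))
              (measure_mono (diff_subset_diff_left hBsub2))
        _ ≤ θ * ENNReal.ofReal (((1+2*η)*r)^n) * κ + θ * ENNReal.ofReal (((1+2*η)*r)^n) * κ :=
            add_le_add hS1 hT2
        _ = (θ * ENNReal.ofReal (((1+2*η)*r)^n) + θ * ENNReal.ofReal (((1+2*η)*r)^n)) * κ :=
            (add_mul _ _ κ).symm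
        _ = ENNReal.ofReal ((η*r)^n / 2) * κ := by
            congr 1
            rw [hθdef, ← ENNReal.ofReal_mul hc0.le, ← ENNReal.ofReal_add (by positivity) (by positivity)]
            congr 1
            have h2 : ((1:ℝ) + 2*η)^n ≠ 0 := by positivity
            rw [hcdef, mul_pow, mul_pow]
            field_simp
            ring
    refine lt_of_le_of_lt hb ?_
    rw [hvB']
    have : ENNReal.ofReal ((η*r)^n / 2) < ENNReal.ofReal ((η*r)^n) := by
      rw [ENNReal.ofReal_lt_ofReal_iff (by positivity)]
      have : (0:ℝ) < (η*r)^n := by positivity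
      linarith
    exact (ENNReal.mul_lt_mul_iff_left hκ0 hκt).2 this
  obtain ⟨y, hyB', hyS, hyT⟩ := nonempty_inter_of_diff_lt hkey
  -- estimates
  have hyx2r : ‖y - x‖ ≤ 2 * r := by
    have := hBsub2 hyB'
    rw [mem_closedBall, dist_eq_norm] at this
    nlinarith
  have hfb : ‖f y - f x - L (y - x)‖ ≤ ε/8 * ‖y - x‖ := by
    rcases eq_or_ne y x with rfl | hne
    · simp
    · have hmem : y ∈ Metric.ball x ρ₁ ∩ (S \ {x}) := by
        refine ⟨?_, hyS, hne⟩
        rw [mem_ball, dist_eq_norm]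
        linarith [hyx2r]
      have hlt : ‖f y - f x - L (y - x)‖ / ‖y - x‖ < ε/8 := hball₁ hmem
      have hpos : (0:ℝ) < ‖y - x‖ := by rw [norm_pos_iff]; exact sub_ne_zero.2 hne
      rw [div_lt_iff₀ hpos] at hlt
      linarith
  have hgb : ‖g y - g x - M (y - x)‖ ≤ ε/8 * ‖y - x‖ := by
    apply hball₂
    rw [mem_ball, dist_eq_norm]
    linarith [hyx2r]
  have hfgy : f y = g y := hfg hyT
  have hfgx : f x = g x := hfg hxT
  have hPyx : ‖P (y - x)‖ ≤ ε/4 * (2*r) := by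
    have hid : P (y - x) = (g y - g x - M (y - x)) - (f y - f x - L (y - x)) := by
      rw [hP, ContinuousLinearMap.sub_apply, hfgy, hfgx]
      abel
    calc ‖P (y - x)‖ ≤ ‖g y - g x - M (y - x)‖ + ‖f y - f x - L (y - x)‖ := by
          rw [hid]; exact norm_sub_le _ _
      _ ≤ ε/8 * ‖y - x‖ + ε/8 * ‖y - x‖ := add_le_add hgb hfb
      _ = ε/4 * ‖y - x‖ := by ring
      _ ≤ ε/4 * (2*r) := by nlinarith [hyx2r]
  have hPrw : ‖P (r • w)‖ ≤ ε * r := by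
    have hdy : ‖r • w - (y - x)‖ ≤ η * r := by
      have h1 : dist y z₀ ≤ η * r := mem_closedBall.1 hyB'
      rw [dist_eq_norm, hz₀, sub_add_eq_sub_sub] at h1
      calc ‖r • w - (y - x)‖ = ‖y - x - r • w‖ := norm_sub_rev _ _
        _ ≤ η * r := h1
    calc ‖P (r • w)‖ = ‖P (y - x) + P (r • w - (y - x))‖ := by
          rw [← map_add, add_sub_cancel]
      _ ≤ ‖P (y - x)‖ + ‖P (r • w - (y - x))‖ := norm_add_le _ _
      _ ≤ ε/4 * (2*r) + ‖P‖ * (η * r) := by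
          refine add_le_add hPyx ?_
          calc ‖P (r • w - (y - x))‖ ≤ ‖P‖ * ‖r • w - (y - x)‖ := P.le_opNorm _
            _ ≤ ‖P‖ * (η * r) := by nlinarith [hdy]
      _ ≤ ε/2 * r + ε/2 * r := by
          have h7 : ‖P‖ * η * r ≤ ε/2 * r := mul_le_mul_of_nonneg_right hηP hr0.le
          nlinarith [h7]
      _ = ε * r := by ring
  have : r * ‖P w‖ ≤ ε * r := by
    have : ‖P (r • w)‖ = r * ‖P w‖ := by
      rw [P.map_smul, norm_smul, Real.norm_eq_abs, abs_of_pos hr0]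
    linarith [hPrw, this.symm.le]
  nlinarith [this]


end AuxStmt4

set_option maxHeartbeats 1000000 in
theorem stmt4 {n : ℕ} (Ω : Set (Em n)) (hΩ : IsOpen Ω)
    (f : Em n → Em n) (hf : ContinuousOn f Ω)
    (Df : Em n → Em n →L[ℝ] Em n)
    (hDf : ∀ᵐ x ∂(volume.restrict Ω), HasApproxDerivAt f (Df x) x)
    (hN : LusinN f Ω) :
    ∀ A ⊆ Ω, MeasurableSet A →
      volume (f '' A) ≤ ∫⁻ x in A, ENNReal.ofReal |(Df x).det| := by
  intro A hA hAm
  -- a measurable full-measure subset of Ω where approximate differentiability holds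
  have hbad : volume ({x | ¬ HasApproxDerivAt f (Df x) x} ∩ Ω) = 0 := by
    have h := hDf
    rw [ae_iff] at h
    rwa [Measure.restrict_apply' hΩ.measurableSet] at h
  set G : Set (Em n) :=
    Ω \ toMeasurable volume ({x | ¬ HasApproxDerivAt f (Df x) x} ∩ Ω) with hG
  have hGm : MeasurableSet G := hΩ.measurableSet.diff (measurableSet_toMeasurable _ _)
  have hGsub : G ⊆ Ω := diff_subset
  have hΩG : volume (Ω \ G) = 0 := by
    have hsub : Ω \ G ⊆ toMeasurable volume ({x | ¬ HasApproxDerivAt f (Df x) x} ∩ Ω) := by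
      rintro x ⟨hx1, hx2⟩
      by_contra h
      exact hx2 ⟨hx1, h⟩
    exact measure_mono_null hsub (by rw [measure_toMeasurable]; exact hbad)
  have hGood : ∀ x ∈ G, HasApproxDerivAt f (Df x) x := by
    intro x hx
    by_contra h
    exact hx.2 (subset_toMeasurable _ _ ⟨h, hx.1⟩)
  -- dense sequence and enumeration of classes
  obtain ⟨u, hu⟩ := TopologicalSpace.exists_dense_seq (Em n)
  set e : ℕ ≃ ℕ × ℕ × ℕ := (Denumerable.eqv (ℕ × ℕ × ℕ)).symm with he
  set Es : ℕ → Set (Em n) := fun m => goodSet f Df (e m).1 (e m).2.1 (u (e m).2.2) with hEs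
  have hcover : ∀ x ∈ G, ∃ m, x ∈ Es m := by
    intro x hx
    obtain ⟨k, N, j, h⟩ := mem_goodSet_of_approx (hGood x hx) hu
    refine ⟨e.symm (k, N, j), ?_⟩
    rw [hEs]
    simp only [Equiv.apply_symm_apply]
    exact h
  -- Lipschitz extensions
  have hext : ∀ m, ∃ gm : Em n → Em n, (∃ C, LipschitzWith C gm) ∧ EqOn f gm (Es m) :=
    fun m => lipschitzOnWith_extend (goodSet_lipschitz _ _ _)
  choose g hgLip hgEq using hext
  choose C hC using hgLip
  -- coincidence sets
  set E' : ℕ → Set (Em n) := fun m => {x | x ∈ Ω ∧ f x = g m x} with hE'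
  have hE'm : ∀ m, MeasurableSet (E' m) := by
    intro m
    have hopen : IsOpen {x | x ∈ Ω ∧ f x ≠ g m x} := by
      rw [isOpen_iff_mem_nhds]
      rintro x ⟨hxΩ, hxne⟩
      have hc : ContinuousAt (fun y => f y - g m y) x :=
        (hf.continuousAt (hΩ.mem_nhds hxΩ)).sub (hC m).continuous.continuousAt
      have hne : (fun y => f y - g m y) x ≠ 0 := sub_ne_zero.2 hxne
      filter_upwards [hc.eventually_ne hne, hΩ.mem_nhds hxΩ] with y h1 h2
      exact ⟨h2, sub_ne_zero.1 h1⟩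
    have hEq : E' m = Ω \ {x | x ∈ Ω ∧ f x ≠ g m x} := by
      ext x
      constructor
      · rintro ⟨h1, h2⟩; exact ⟨h1, fun h => h.2 h2⟩
      · rintro ⟨h1, h2⟩
        refine ⟨h1, ?_⟩
        by_contra h
        exact h2 ⟨h1, h⟩
    rw [hEq]
    exact hΩ.measurableSet.diff hopen.measurableSet
  -- differentiability sets
  set D : ℕ → Set (Em n) := fun m => {x | DifferentiableAt ℝ (g m) x} with hD
  have hDm : ∀ m, MeasurableSet (D m) := fun m => measurableSet_of_differentiableAt ℝ (g m)
  have hDc : ∀ m, volume (D m)ᶜ = 0 := by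
    intro m
    have h := (hC m).ae_differentiableAt (μ := volume)
    rw [ae_iff] at h
    exact h
  -- measurable partition
  set t : ℕ → Set (Em n) := disjointed (fun m => E' m ∩ D m) with ht
  have htm : ∀ m, MeasurableSet (t m) :=
    MeasurableSet.disjointed (fun m => (hE'm m).inter (hDm m))
  have htd : Pairwise (Function.onFun Disjoint t) := disjoint_disjointed _
  have htsub : ∀ m, t m ⊆ E' m ∩ D m := disjointed_subset _
  set S : ℕ → Set (Em n) := fun m => A ∩ G ∩ t m with hS
  have hSm : ∀ m, MeasurableSet (S m) := fun m => (hAm.inter hGm).inter (htm m)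
  have hSd : Pairwise (Function.onFun Disjoint S) := fun i j hij =>
    ((htd hij).mono inter_subset_right inter_subset_right)
  -- a.e. equality of derivatives on the pieces
  have haeq : ∀ m, ∀ᵐ x, x ∈ S m → Df x = fderiv ℝ (g m) x := by
    intro m
    filter_upwards [Besicovitch.ae_tendsto_measure_inter_div_of_measurableSet volume (hE'm m)]
      with x hx hxS
    have hxE' : x ∈ E' m := ((htsub m) hxS.2).1
    have hxD : x ∈ D m := ((htsub m) hxS.2).2
    have hxG : x ∈ G := hxS.1.2
    have hdens1 : Tendsto
        (fun r => volume (E' m ∩ closedBall x r) / volume (closedBall x r)) (𝓝[>] (0:ℝ)) (𝓝 1) := by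
      have : (E' m).indicator (1 : Em n → ℝ≥0∞) x = 1 := by
        rw [indicator_of_mem hxE']; rfl
      rwa [this] at hx
    exact approx_deriv_unique (hGood x hxG) (hE'm m) hxE' hdens1 hxD.hasFDerivAt
      (fun y hy => hy.2)
  -- image bound on each piece
  have himg : ∀ m, volume (f '' S m) ≤ ∫⁻ x in S m, ENNReal.ofReal |(Df x).det| := by
    intro m
    have hfg' : EqOn f (g m) (S m) := fun y hy => ((htsub m) hy.2).1.2
    have himeq : f '' S m = g m '' S m := image_congr hfg'
    have hder : ∀ x ∈ S m, HasFDerivWithinAt (g m) (fderiv ℝ (g m) x) (S m) x :=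
      fun x hx => (((htsub m) hx.2).2.hasFDerivAt).hasFDerivWithinAt
    have h1 : volume (g m '' S m) ≤ ∫⁻ x in S m, ENNReal.ofReal |(fderiv ℝ (g m) x).det| :=
      addHaar_image_le_lintegral_abs_det_fderiv volume (hSm m) hder
    have h2 : ∫⁻ x in S m, ENNReal.ofReal |(fderiv ℝ (g m) x).det|
        = ∫⁻ x in S m, ENNReal.ofReal |(Df x).det| := by
      apply lintegral_congr_ae
      filter_upwards [ae_restrict_of_ae (haeq m), ae_restrict_mem (hSm m)] with x h3 h4
      rw [h3 h4]
    rw [himeq]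
    exact h1.trans h2.le
  -- null leftovers
  have hA1 : volume (f '' (A \ G)) = 0 := by
    apply hN _ (diff_subset.trans hA)
    exact measure_mono_null (diff_subset_diff_left hA) hΩG
  have hA2 : volume (f '' ((A ∩ G) \ ⋃ m, t m)) = 0 := by
    apply hN _ ((diff_subset.trans inter_subset_left).trans hA)
    refine measure_mono_null ?_ (measure_iUnion_null hDc)
    · rintro x ⟨⟨hxA, hxG⟩, hxU⟩
      obtain ⟨m, hm⟩ := hcover x hxG
      refine mem_iUnion.2 ⟨m, fun hD' => ?_⟩
      apply hxU
      rw [ht, iUnion_disjointed]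
      exact mem_iUnion.2 ⟨m, ⟨⟨hGsub hxG, hgEq m hm⟩, hD'⟩⟩
  -- assembly
  have hsplit : f '' A ⊆ f '' (A \ G) ∪ (f '' ((A ∩ G) \ ⋃ m, t m) ∪ ⋃ m, f '' S m) := by
    rintro z ⟨x, hx, rfl⟩
    by_cases h1 : x ∈ G
    · by_cases h2 : x ∈ ⋃ m, t m
      · obtain ⟨m, hm⟩ := mem_iUnion.1 h2
        exact Or.inr (Or.inr (mem_iUnion.2 ⟨m, mem_image_of_mem f ⟨⟨hx, h1⟩, hm⟩⟩))
      · exact Or.inr (Or.inl (mem_image_of_mem f ⟨⟨hx, h1⟩, h2⟩))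
    · exact Or.inl (mem_image_of_mem f ⟨hx, h1⟩)
  calc volume (f '' A)
      ≤ volume (f '' (A \ G)) +
        (volume (f '' ((A ∩ G) \ ⋃ m, t m)) + volume (⋃ m, f '' S m)) := by
        refine (measure_mono hsplit).trans ?_
        refine (measure_union_le _ _).trans ?_
        gcongr
        exact measure_union_le _ _
    _ = volume (⋃ m, f '' S m) := by rw [hA1, hA2, zero_add, zero_add]
    _ ≤ ∑' m, volume (f '' S m) := measure_iUnion_le _
    _ ≤ ∑' m, ∫⁻ x in S m, ENNReal.ofReal |(Df x).det| := ENNReal.tsum_le_tsum himg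
    _ = ∫⁻ x in ⋃ m, S m, ENNReal.ofReal |(Df x).det| := (lintegral_iUnion hSm hSd _).symm
    _ ≤ ∫⁻ x in A, ENNReal.ofReal |(Df x).det| := by
        refine lintegral_mono' (Measure.restrict_mono ?_ le_rfl) le_rfl
        exact iUnion_subset fun m => inter_subset_left.trans inter_subset_left
end
end

section
/- Let Ω ⊆ ℝⁿ be open and f : Ω → ℝⁿ be continuous, approximately differentiable almost everywhere, and injective almost everywhere (injective off a set of measure zero). Then for every Borel set E ⊆ Ω, ∫_E |J_a f(x)| dx ≤ |f(E)|, where f(E) is Lebesgue measurable. -/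
open MeasureTheory Metric Filter Topology Set
open scoped ENNReal NNReal Topology

noncomputable section

variable {n : ℕ}

/-- From a density-ratio limit, an eventual bound on the measure of the complement. -/
lemma density_compl_bound {S : Set (Em n)} (hS : MeasurableSet S) {β : ℝ → Set (Em n)}
    (hβ : ∀ᶠ r in 𝓝[>] (0:ℝ), volume (β r) ≠ 0 ∧ volume (β r) ≠ ∞)
    (h : Tendsto (fun r : ℝ => volume (S ∩ β r) / volume (β r)) (𝓝[>] (0:ℝ)) (𝓝 1))
    {γ : ℝ≥0∞} (hγ : 0 < γ) :
    ∀ᶠ r in 𝓝[>] (0:ℝ), volume (β r \ S) ≤ γ * volume (β r) := by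
  rcases le_or_gt 1 γ with hγ1 | hγ1
  · filter_upwards [hβ] with r hr
    calc volume (β r \ S) ≤ volume (β r) := measure_mono diff_subset
    _ = 1 * volume (β r) := (one_mul _).symm
    _ ≤ γ * volume (β r) := by gcongr
  · have h1γ : (1:ℝ≥0∞) - γ < 1 := ENNReal.sub_lt_self ENNReal.one_ne_top one_ne_zero hγ.ne'
    filter_upwards [hβ, h.eventually (lt_mem_nhds h1γ)] with r hr hlt
    have hb0 : volume (β r) ≠ 0 := hr.1
    have hbt : volume (β r) ≠ ∞ := hr.2
    have hle : (1 - γ) * volume (β r) ≤ volume (β r ∩ S) := by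
      rw [inter_comm (β r) S]
      rw [← ENNReal.le_div_iff_mul_le (Or.inl hb0) (Or.inl hbt)]
      exact hlt.le
    have hsplit : volume (β r ∩ S) + volume (β r \ S) = volume (β r) :=
      measure_inter_add_diff (β r) hS
    have haT : volume (β r ∩ S) ≠ ∞ := ne_top_of_le_ne_top hbt (measure_mono inter_subset_left)
    have hc : volume (β r \ S) = volume (β r) - volume (β r ∩ S) :=
      ENNReal.eq_sub_of_add_eq haT (by rw [add_comm]; exact hsplit)
    calc volume (β r \ S) = volume (β r) - volume (β r ∩ S) := hc
    _ ≤ volume (β r) - (1 - γ) * volume (β r) := tsub_le_tsub_left hle _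
    _ = (1 - (1 - γ)) * volume (β r) := by
        conv_rhs => rw [ENNReal.sub_mul (fun _ _ => hbt), one_mul]
    _ = γ * volume (β r) := by rw [ENNReal.sub_sub_cancel ENNReal.one_ne_top hγ1.le]

lemma eventually_ball_ok (x : Em n) :
    ∀ᶠ r in 𝓝[>] (0:ℝ), volume (ball x r) ≠ 0 ∧ volume (ball x r) ≠ ∞ := by
  filter_upwards [self_mem_nhdsWithin] with r (hr : 0 < r)
  exact ⟨(measure_ball_pos volume x hr).ne', measure_ball_lt_top.ne⟩

lemma eventually_closedBall_ok (x : Em n) :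
    ∀ᶠ r in 𝓝[>] (0:ℝ), volume (closedBall x r) ≠ 0 ∧ volume (closedBall x r) ≠ ∞ := by
  filter_upwards [self_mem_nhdsWithin] with r (hr : 0 < r)
  exact ⟨(measure_closedBall_pos volume x hr).ne', measure_closedBall_lt_top.ne⟩
variable {n : ℕ}

/-- A linear map which vanishes approximately along a set of density one is zero. -/
lemma approx_eq_zero_of_density {L : Em n →L[ℝ] Em n} {x : Em n} {W : Set (Em n)}
    (hd : ∀ γ : ℝ≥0∞, 0 < γ → ∀ᶠ r in 𝓝[>] (0:ℝ),
      volume (ball x r \ W) ≤ γ * volume (ball x r))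
    (hq : Tendsto (fun y => ‖L (y - x)‖ / ‖y - x‖) (𝓝[W \ {x}] x) (𝓝 0)) : L = 0 := by
  by_contra hL
  obtain ⟨v, hv⟩ : ∃ v, L v ≠ 0 := by
    by_contra h
    push_neg at h
    exact hL (ContinuousLinearMap.ext fun w => by simp [h w])
  have hv0 : v ≠ 0 := fun h => hv (by simp [h])
  haveI : Nontrivial (Em n) := nontrivial_of_ne v 0 hv0
  set u : Em n := ‖v‖⁻¹ • v with hu_def
  have hu : ‖u‖ = 1 := norm_smul_inv_norm hv0
  clear_value u
  set c : ℝ := ‖L u‖ with hc_def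
  have hc : 0 < c := by
    have : L u = ‖v‖⁻¹ • L v := by rw [hu_def, ContinuousLinearMap.map_smul]
    have hne : L u ≠ 0 := by
      rw [this]
      exact smul_ne_zero (inv_ne_zero (norm_ne_zero_iff.2 hv0)) hv
    exact norm_pos_iff.2 hne
  clear_value c
  set M : ℝ := ‖L‖ + 1 with hM_def
  have hM : 0 < M := by positivity
  have hLM : ‖L‖ ≤ M := by simp [hM_def]
  clear_value M
  set δ : ℝ := min (c / (2 * M)) (1 / 2) with hδ_def
  have hδ0 : 0 < δ := lt_min (by positivity) (by norm_num)
  have hδhalf : δ ≤ 1 / 2 := min_le_right _ _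
  have hδM : M * δ ≤ c / 2 := by
    have h1 : δ ≤ c / (2 * M) := min_le_left _ _
    calc M * δ ≤ M * (c / (2 * M)) := mul_le_mul_of_nonneg_left h1 hM.le
    _ = c / 2 := by field_simp
  clear_value δ
  set γ : ℝ≥0∞ := ENNReal.ofReal ((δ / 2) ^ n) / 2 with hγ_def
  have hγ : 0 < γ := by
    apply ENNReal.div_pos _ ENNReal.ofNat_ne_top
    simp only [ne_eq, ENNReal.ofReal_eq_zero, not_le]
    positivity
  clear_value γ
  -- quotient eventually small
  have hev : {y | ‖L (y - x)‖ / ‖y - x‖ < c / 4} ∈ 𝓝[W \ {x}] x :=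
    hq (gt_mem_nhds (by positivity : (0:ℝ) < c / 4))
  obtain ⟨ρ, hρ0, hρ⟩ := Metric.mem_nhdsWithin_iff.1 hev
  obtain ⟨ρ₀, hρ₀0, hρ₀⟩ := Metric.mem_nhdsWithin_iff.1 (hd γ hγ)
  set r : ℝ := min (ρ / 4) (ρ₀ / 4) with hr_def
  have hr0 : 0 < r := lt_min (by positivity) (by positivity)
  have hrρ : r ≤ ρ / 4 := min_le_left _ _
  have hrρ₀ : r ≤ ρ₀ / 4 := min_le_right _ _
  clear_value r
  have h2r : (2 * r) ∈ ball (0:ℝ) ρ₀ ∩ Ioi 0 := by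
    constructor
    · simp only [mem_ball, dist_zero_right, Real.norm_eq_abs, abs_of_pos (by positivity : (0:ℝ) < 2*r)]
      linarith [hrρ₀]
    · exact mem_Ioi.2 (by positivity)
  have hbound : volume (ball x (2 * r) \ W) ≤ γ * volume (ball x (2 * r)) := hρ₀ h2r
  set y₀ : Em n := x + r • u with hy₀_def
  have hsub : ball y₀ (δ * r) ⊆ ball x (2 * r) := by
    intro z hz
    simp only [mem_ball] at hz ⊢
    have hd1 : dist y₀ x = r := by
      rw [hy₀_def, dist_eq_norm, add_sub_cancel_left, norm_smul, Real.norm_eq_abs,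
        abs_of_pos hr0, hu, mul_one]
    calc dist z x ≤ dist z y₀ + dist y₀ x := dist_triangle _ _ _
    _ < δ * r + r := by linarith
    _ ≤ 2 * r := by nlinarith
  have hvol : γ * volume (ball x (2 * r)) < volume (ball y₀ (δ * r)) := by
    rw [Measure.addHaar_ball _ _ (by positivity : (0:ℝ) ≤ 2 * r),
      Measure.addHaar_ball _ _ (by positivity : (0:ℝ) ≤ δ * r), finrank_euclideanSpace_fin]
    set C := volume (ball (0 : Em n) 1) with hC_def
    have hC0 : C ≠ 0 := (measure_ball_pos volume 0 one_pos).ne'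
    have hCt : C ≠ ∞ := measure_ball_lt_top.ne
    have e1 : ENNReal.ofReal ((δ / 2) ^ n) * ENNReal.ofReal ((2 * r) ^ n)
        = ENNReal.ofReal ((δ * r) ^ n) := by
      rw [← ENNReal.ofReal_mul (by positivity), ← mul_pow]
      congr 2
      ring
    have key : γ * (ENNReal.ofReal ((2 * r) ^ n) * C)
        = (ENNReal.ofReal ((δ * r) ^ n) * C) / 2 := by
      rw [hγ_def, ENNReal.div_eq_inv_mul, ENNReal.div_eq_inv_mul, ← e1]
      ring
    rw [key]
    apply ENNReal.half_lt_self
    · simp only [ne_eq, mul_eq_zero, not_or, ENNReal.ofReal_eq_zero, not_le]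
      exact ⟨by positivity, hC0⟩
    · exact ENNReal.mul_ne_top ENNReal.ofReal_ne_top hCt
  obtain ⟨z, hzball, hzW⟩ : ∃ z, z ∈ ball y₀ (δ * r) ∧ z ∈ W := by
    by_contra h
    push_neg at h
    have : ball y₀ (δ * r) ⊆ ball x (2 * r) \ W :=
      fun z hz => ⟨hsub hz, h z hz⟩
    exact absurd ((measure_mono this).trans hbound) (not_le.2 hvol)
  have hznear : ‖z - x - r • u‖ < δ * r := by
    have := mem_ball.1 hzball
    rw [dist_eq_norm] at this
    rw [show z - x - r • u = z - y₀ by rw [hy₀_def]; abel]; exact this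
  have hzx_lb : r / 2 ≤ ‖z - x‖ := by
    have h1 : ‖r • u‖ ≤ ‖z - x‖ + ‖z - x - r • u‖ := by
      have h1' := norm_sub_le (z - x) (z - x - r • u)
      have h2' : z - x - (z - x - r • u) = r • u := by abel
      rwa [h2'] at h1'
    have h2 : ‖r • u‖ = r := by
      rw [norm_smul, Real.norm_eq_abs, abs_of_pos hr0, hu, mul_one]
    nlinarith
  have hzx0 : 0 < ‖z - x‖ := lt_of_lt_of_le (by positivity) hzx_lb
  have hzne : z ≠ x := by
    intro h
    rw [h, sub_self, norm_zero] at hzx0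
    exact lt_irrefl _ hzx0
  have hzx_ub : ‖z - x‖ < 2 * r := by
    have := mem_ball.1 (hsub hzball)
    rwa [dist_eq_norm] at this
  have hzρ : z ∈ ball x ρ ∩ (W \ {x}) := by
    refine ⟨?_, hzW, hzne⟩
    rw [mem_ball, dist_eq_norm]
    linarith [hrρ]
  have hsmall : ‖L (z - x)‖ / ‖z - x‖ < c / 4 := hρ hzρ
  -- lower bound on ‖L (z - x)‖
  have hLru : ‖L (r • u)‖ = r * c := by
    rw [ContinuousLinearMap.map_smul, norm_smul, Real.norm_eq_abs, abs_of_pos hr0, hc_def]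
  have hLdiff : ‖L (z - x - r • u)‖ ≤ M * (δ * r) := by
    calc ‖L (z - x - r • u)‖ ≤ ‖L‖ * ‖z - x - r • u‖ := L.le_opNorm _
    _ ≤ M * (δ * r) := mul_le_mul hLM hznear.le (norm_nonneg _) hM.le
  have hLlb : r * c / 2 ≤ ‖L (z - x)‖ := by
    have h1 : ‖L (r • u)‖ - ‖L (z - x)‖ ≤ ‖L (r • u) - L (z - x)‖ := norm_sub_norm_le _ _
    have h3 : ‖L (r • u) - L (z - x)‖ = ‖L (z - x - r • u)‖ := by
      rw [← L.map_sub, ← norm_neg (L (r • u - (z - x))), ← L.map_neg]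
      congr 1
      abel
    have h4 : M * (δ * r) ≤ c / 2 * r := by
      have := mul_le_mul_of_nonneg_right hδM hr0.le
      calc M * (δ * r) = M * δ * r := by ring
      _ ≤ c / 2 * r := this
    rw [hLru, h3] at h1
    linarith [hLdiff, h1, h4]
  have hfin : c / 4 ≤ ‖L (z - x)‖ / ‖z - x‖ := by
    rw [le_div_iff₀ hzx0]
    have hstep : c / 4 * ‖z - x‖ ≤ c / 4 * (2 * r) :=
      mul_le_mul_of_nonneg_left hzx_ub.le (by positivity)
    linarith [hLlb, hstep]
  linarith

lemma federer_decomp {Ω : Set (Em n)} (hΩ : IsOpen Ω) {f : Em n → Em n}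
    (hf : ContinuousOn f Ω) {Df : Em n → Em n →L[ℝ] Em n} {G : Set (Em n)}
    (hG : MeasurableSet G) (hGΩ : G ⊆ Ω)
    (hGP : ∀ x ∈ G, HasApproxDerivAt f (Df x) x) :
    ∃ u : ℕ → Set (Em n), (∀ k, MeasurableSet (u k)) ∧ (∀ k, u k ⊆ G) ∧
      (G ⊆ ⋃ k, u k) ∧ ∀ k, ∃ K : ℝ≥0, LipschitzOnWith K f (u k) := by
  set γn : ℝ≥0∞ := (2 : ℝ≥0∞)⁻¹ ^ (n + 2) with hγn_def
  have hγn : 0 < γn := by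
    apply ENNReal.pow_pos
    simp
  have hγn14 : γn ≤ (2 : ℝ≥0∞)⁻¹ ^ 2 := by
    rw [hγn_def, pow_add]
    calc (2:ℝ≥0∞)⁻¹ ^ n * (2:ℝ≥0∞)⁻¹ ^ 2 ≤ 1 * (2:ℝ≥0∞)⁻¹ ^ 2 :=
          mul_le_mul_left (pow_le_one' (ENNReal.inv_le_one.2 one_le_two) n) _
    _ = (2:ℝ≥0∞)⁻¹ ^ 2 := one_mul _
  have hγn2n : γn * 2 ^ n ≤ (2 : ℝ≥0∞)⁻¹ ^ 2 := le_of_eq <| by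
    rw [hγn_def, pow_add]
    calc (2:ℝ≥0∞)⁻¹ ^ n * (2:ℝ≥0∞)⁻¹ ^ 2 * 2 ^ n
        = ((2:ℝ≥0∞)⁻¹ ^ n * 2 ^ n) * (2:ℝ≥0∞)⁻¹ ^ 2 := by ring
    _ = (((2:ℝ≥0∞)⁻¹ * 2) ^ n) * (2:ℝ≥0∞)⁻¹ ^ 2 := by rw [mul_pow]
    _ = (2:ℝ≥0∞)⁻¹ ^ 2 := by
        rw [ENNReal.inv_mul_cancel (by norm_num) (by norm_num), one_pow, one_mul]
  -- the basic sets
  set F : ℕ → ℕ → Set (Em n) := fun m i =>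
    {x | x ∈ G ∧ ∃ S : Set (Em n), MeasurableSet S ∧
      (∀ r : ℝ, 0 < r → r ≤ 1 / (i + 1) → volume (ball x r \ S) ≤ γn * volume (ball x r)) ∧
      (∀ y ∈ S, dist y x ≤ 1 / (i + 1) → dist (f y) (f x) ≤ (m : ℝ) * dist y x)} with hF_def
  -- every point of G is in some F m i
  have hcover : ∀ x ∈ G, ∃ m i : ℕ, x ∈ F m i := by
    intro x hx
    obtain ⟨S, hSm, hSd, hSq⟩ := hGP x hx
    have hball := density_compl_bound hSm (eventually_ball_ok x) hSd hγn
    obtain ⟨r₁, hr₁0, hr₁⟩ := Metric.mem_nhdsWithin_iff.1 hball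
    have hq : {y | ‖f y - f x - Df x (y - x)‖ / ‖y - x‖ < 1} ∈ 𝓝[S \ {x}] x :=
      hSq (gt_mem_nhds one_pos)
    obtain ⟨ρ, hρ0, hρ⟩ := Metric.mem_nhdsWithin_iff.1 hq
    obtain ⟨m, hm⟩ := exists_nat_ge (‖Df x‖ + 1)
    obtain ⟨i, hi⟩ := exists_nat_one_div_lt (show (0:ℝ) < min r₁ ρ by positivity)
    refine ⟨m, i, hx, S, hSm, ?_, ?_⟩
    · intro r hr0 hrle
      refine hr₁ ⟨?_, mem_Ioi.2 hr0⟩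
      simp only [mem_ball, dist_zero_right, Real.norm_eq_abs, abs_of_pos hr0]
      calc r ≤ 1 / (i + 1) := hrle
      _ < min r₁ ρ := hi
      _ ≤ r₁ := min_le_left _ _
    · intro y hyS hyd
      rcases eq_or_ne y x with rfl | hyx
      · simp
      · have hmem : y ∈ ball x ρ ∩ (S \ {x}) := by
          refine ⟨?_, hyS, hyx⟩
          rw [mem_ball]
          calc dist y x ≤ 1 / (i + 1) := hyd
          _ < min r₁ ρ := hi
          _ ≤ ρ := min_le_right _ _
        have hqlt : ‖f y - f x - Df x (y - x)‖ / ‖y - x‖ < 1 := hρ hmem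
        have hyx0 : 0 < ‖y - x‖ := by
          rw [norm_pos_iff, sub_ne_zero]; exact hyx
        have h1 : ‖f y - f x - Df x (y - x)‖ < ‖y - x‖ := by
          rw [div_lt_iff₀ hyx0, one_mul] at hqlt
          exact hqlt
        have h2 : ‖f y - f x‖ ≤ ‖Df x (y - x)‖ + ‖f y - f x - Df x (y - x)‖ := by
          have := norm_add_le (Df x (y - x)) (f y - f x - Df x (y - x))
          have he : Df x (y - x) + (f y - f x - Df x (y - x)) = f y - f x := by abel
          rwa [he] at this
        have h3 : ‖Df x (y - x)‖ ≤ ‖Df x‖ * ‖y - x‖ := (Df x).le_opNorm _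
        rw [dist_eq_norm, dist_eq_norm]
        have hmR : ‖Df x‖ + 1 ≤ (m : ℝ) := hm
        nlinarith [norm_nonneg (y - x)]
  -- local Lipschitz property on F m i
  have hlip : ∀ m i : ℕ, ∀ x ∈ F m i, ∀ y ∈ F m i,
      dist x y ≤ 1 / (2 * (i + 1)) → dist (f x) (f y) ≤ 3 * m * dist x y := by
    intro m i x hxF y hyF hdle
    rcases subsingleton_or_nontrivial (Em n) with hsub | hnt
    · have hxy : x = y := Subsingleton.elim x y
      subst hxy
      simp
    rcases eq_or_ne x y with rfl | hxy
    · simp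
    have hd0 : 0 < dist x y := dist_pos.2 hxy
    set d : ℝ := dist x y with hd_def
    obtain ⟨-, Sx, hSxm, hSxd, hSxq⟩ := hxF
    obtain ⟨-, Sy, hSym, hSyd, hSyq⟩ := hyF
    have hdi : d ≤ 1 / (i + 1) := by
      calc d ≤ 1 / (2 * (i + 1)) := hdle
      _ ≤ 1 / (i + 1) := by
          apply div_le_div_of_nonneg_left one_pos.le (by positivity)
          nlinarith [Nat.cast_nonneg (α := ℝ) i]
    have h2di : 2 * d ≤ 1 / (i + 1) := by
      rw [le_div_iff₀ (by positivity : (0:ℝ) < 2 * ((i:ℝ) + 1))] at hdle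
      rw [le_div_iff₀ (by positivity : (0:ℝ) < (i:ℝ) + 1)]
      linarith
    have hb1 : volume (ball x d \ Sx) ≤ γn * volume (ball x d) := hSxd d hd0 hdi
    have hsubset : ball x d ⊆ ball y (2 * d) := by
      intro z hz
      rw [mem_ball] at hz ⊢
      calc dist z y ≤ dist z x + dist x y := dist_triangle _ _ _
      _ < d + d := by rw [hd_def]; exact add_lt_add_left hz _
      _ = 2 * d := by ring
    have hb2 : volume (ball x d \ Sy) ≤ γn * volume (ball y (2 * d)) := by
      refine le_trans (measure_mono (diff_subset_diff_left hsubset)) ?_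
      exact hSyd (2 * d) (by positivity) h2di
    set C := volume (ball (0 : Em n) 1) with hC_def
    have hC0 : C ≠ 0 := (measure_ball_pos volume 0 one_pos).ne'
    have hCt : C ≠ ∞ := measure_ball_lt_top.ne
    have hvx : volume (ball x d) = ENNReal.ofReal (d ^ n) * C := by
      rw [Measure.addHaar_ball _ _ hd0.le, finrank_euclideanSpace_fin]
    have hvy : volume (ball y (2 * d)) = 2 ^ n * (ENNReal.ofReal (d ^ n) * C) := by
      rw [Measure.addHaar_ball _ _ (by positivity : (0:ℝ) ≤ 2 * d), finrank_euclideanSpace_fin,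
        mul_pow, ← mul_assoc, ENNReal.ofReal_mul (by positivity), ENNReal.ofReal_pow (by norm_num),
        ENNReal.ofReal_ofNat]
    have htotal : volume (ball x d \ (Sx ∩ Sy)) < volume (ball x d) := by
      have hsplit : ball x d \ (Sx ∩ Sy) = (ball x d \ Sx) ∪ (ball x d \ Sy) := by
        rw [diff_inter]
      calc volume (ball x d \ (Sx ∩ Sy))
          ≤ volume (ball x d \ Sx) + volume (ball x d \ Sy) := by
            rw [hsplit]; exact measure_union_le _ _
      _ ≤ γn * volume (ball x d) + γn * volume (ball y (2 * d)) := add_le_add hb1 hb2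
      _ = (γn + γn * 2 ^ n) * (ENNReal.ofReal (d ^ n) * C) := by
            rw [hvx, hvy]; ring
      _ ≤ ((2:ℝ≥0∞)⁻¹ ^ 2 + (2:ℝ≥0∞)⁻¹ ^ 2) * (ENNReal.ofReal (d ^ n) * C) :=
            mul_le_mul_left (add_le_add hγn14 hγn2n) _
      _ = (2:ℝ≥0∞)⁻¹ * (ENNReal.ofReal (d ^ n) * C) := by
            congr 1
            rw [pow_two, ← add_mul, ENNReal.inv_two_add_inv_two, one_mul]
      _ < ENNReal.ofReal (d ^ n) * C := by
            rw [← ENNReal.div_eq_inv_mul]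
            apply ENNReal.half_lt_self
            · simp only [ne_eq, mul_eq_zero, not_or, ENNReal.ofReal_eq_zero, not_le]
              exact ⟨by positivity, hC0⟩
            · exact ENNReal.mul_ne_top ENNReal.ofReal_ne_top hCt
      _ = volume (ball x d) := hvx.symm
    obtain ⟨z, hzball, hzS⟩ : ∃ z, z ∈ ball x d ∧ z ∈ Sx ∩ Sy := by
      by_contra h
      push_neg at h
      have : ball x d ⊆ ball x d \ (Sx ∩ Sy) := fun z hz => ⟨hz, h z hz⟩
      exact absurd (measure_mono this) (not_le.2 htotal)
    have hzx : dist z x ≤ 1 / (i + 1) := by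
      have := mem_ball.1 hzball
      calc dist z x ≤ d := this.le
      _ ≤ 1 / (i + 1) := hdi
    have hzy : dist z y ≤ 1 / (i + 1) := by
      have := mem_ball.1 (hsubset hzball)
      calc dist z y ≤ 2 * d := this.le
      _ ≤ 1 / (i + 1) := h2di
    have e1 : dist (f z) (f x) ≤ (m : ℝ) * dist z x := hSxq z hzS.1 hzx
    have e2 : dist (f z) (f y) ≤ (m : ℝ) * dist z y := hSyq z hzS.2 hzy
    have hzxd : dist z x ≤ d := (mem_ball.1 hzball).le
    have hzyd : dist z y ≤ 2 * d := (mem_ball.1 (hsubset hzball)).le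
    calc dist (f x) (f y) ≤ dist (f x) (f z) + dist (f z) (f y) := dist_triangle _ _ _
    _ = dist (f z) (f x) + dist (f z) (f y) := by rw [dist_comm (f x) (f z)]
    _ ≤ (m : ℝ) * dist z x + (m : ℝ) * dist z y := add_le_add e1 e2
    _ ≤ (m : ℝ) * d + (m : ℝ) * (2 * d) :=
        add_le_add (mul_le_mul_of_nonneg_left hzxd (Nat.cast_nonneg m))
          (mul_le_mul_of_nonneg_left hzyd (Nat.cast_nonneg m))
    _ = 3 * m * d := by ring
  -- assemble pieces
  obtain ⟨cseq, hcseq⟩ := TopologicalSpace.exists_dense_seq (Em n)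
  set P : ℕ × ℕ × ℕ → Set (Em n) := fun p =>
    G ∩ closure (F p.1 p.2.1 ∩ ball (cseq p.2.2) (1 / (4 * (p.2.1 + 1)))) with hP_def
  set e : ℕ ≃ ℕ × ℕ × ℕ := (Denumerable.eqv (ℕ × ℕ × ℕ)).symm with he_def
  refine ⟨fun k => P (e k), ?_, ?_, ?_, ?_⟩
  · intro k
    exact hG.inter isClosed_closure.measurableSet
  · intro k
    exact inter_subset_left
  · intro x hx
    obtain ⟨m, i, hmi⟩ := hcover x hx
    obtain ⟨j, hj⟩ := hcseq.exists_dist_lt x (show (0:ℝ) < 1 / (4 * (i + 1)) by positivity)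
    refine mem_iUnion.2 ⟨e.symm (m, i, j), ?_⟩
    have : e (e.symm (m, i, j)) = (m, i, j) := e.apply_symm_apply _
    rw [this]
    refine ⟨hx, subset_closure ⟨hmi, ?_⟩⟩
    show x ∈ ball (cseq j) (1 / (4 * ((i:ℝ) + 1)))
    rw [mem_ball]
    exact hj
  · intro k
    show ∃ K : ℝ≥0, LipschitzOnWith K f (P (e k))
    set p := e k with hp_def
    obtain ⟨m, i, j⟩ := p
    refine ⟨(3 * m : ℕ), LipschitzOnWith.of_dist_le_mul ?_⟩
    intro x hx y hy
    -- continuity of f at x and y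
    have hfx : ContinuousAt f x := hf.continuousAt (hΩ.mem_nhds (hGΩ hx.1))
    have hfy : ContinuousAt f y := hf.continuousAt (hΩ.mem_nhds (hGΩ hy.1))
    obtain ⟨a, haT, hatend⟩ := mem_closure_iff_seq_limit.1 hx.2
    obtain ⟨b, hbT, hbtend⟩ := mem_closure_iff_seq_limit.1 hy.2
    have hdistk : ∀ k', dist (f (a k')) (f (b k')) ≤ 3 * m * dist (a k') (b k') := by
      intro k'
      apply hlip m i _ (haT k').1 _ (hbT k').1
      have h1 := mem_ball.1 (haT k').2
      have h2 := mem_ball.1 (hbT k').2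
      calc dist (a k') (b k') ≤ dist (a k') (cseq j) + dist (cseq j) (b k') :=
            dist_triangle _ _ _
      _ ≤ 1 / (4 * (i + 1)) + 1 / (4 * (i + 1)) := by
            rw [dist_comm] at h2
            exact add_le_add h1.le h2.le
      _ ≤ 1 / (2 * (i + 1)) := by
            rw [← add_div, div_le_div_iff₀ (by positivity) (by positivity)]
            linarith
    have hleft : Tendsto (fun k' => dist (f (a k')) (f (b k'))) atTop
        (𝓝 (dist (f x) (f y))) :=
      ((hfx.tendsto.comp hatend).dist (hfy.tendsto.comp hbtend))
    have hright : Tendsto (fun k' => 3 * (m:ℝ) * dist (a k') (b k')) atTop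
        (𝓝 (3 * m * dist x y)) :=
      (tendsto_const_nhds.mul (hatend.dist hbtend))
    have := le_of_tendsto_of_tendsto' hleft hright hdistk
    calc dist (f x) (f y) ≤ 3 * (m:ℝ) * dist x y := this
    _ = ((3 * m : ℕ) : ℝ≥0) * dist x y := by push_cast; ring

/-- Area formula inequality on a single measurable piece where `f` is Lipschitz,
approximately differentiable with derivative `Df`, and injective. -/
lemma piece_bound {f : Em n → Em n} {Df : Em n → Em n →L[ℝ] Em n} {s : Set (Em n)}
    (hs : MeasurableSet s)
    (hP : ∀ x ∈ s, HasApproxDerivAt f (Df x) x)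
    {K : ℝ≥0} (hlip : LipschitzOnWith K f s) (hinj : InjOn f s) :
    ∫⁻ x in s, ENNReal.ofReal |(Df x).det| ≤ volume (f '' s) := by
  have h1 : ∀ᵐ x ∂(volume : Measure (Em n)), x ∈ s → DifferentiableWithinAt ℝ f s x :=
    hlip.ae_differentiableWithinAt_of_mem
  have h2 := Besicovitch.ae_tendsto_measure_inter_div_of_measurableSet
    (volume : Measure (Em n)) hs
  have hgood := h1.and h2
  set bad : Set (Em n) := {x | ¬ ((x ∈ s → DifferentiableWithinAt ℝ f s x) ∧
    Tendsto (fun r => volume (s ∩ closedBall x r) / volume (closedBall x r)) (𝓝[>] 0)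
      (𝓝 (s.indicator 1 x)))} with hbad_def
  have hbad0 : volume bad = 0 := ae_iff.1 hgood
  set s' : Set (Em n) := s \ toMeasurable volume bad with hs'_def
  have hs'm : MeasurableSet s' := hs.diff (measurableSet_toMeasurable _ _)
  have hs's : s' ⊆ s := diff_subset
  have hss' : volume (s \ s') = 0 := by
    have hsub : s \ s' ⊆ toMeasurable volume bad := by
      intro x hx
      rcases hx with ⟨hx1, hx2⟩
      by_contra h
      exact hx2 ⟨hx1, h⟩
    refine measure_mono_null hsub ?_
    rw [measure_toMeasurable]
    exact hbad0
  -- every point of s' has an honest derivative within s'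
  have hderiv : ∀ x ∈ s', HasFDerivWithinAt f (Df x) s' x := by
    intro x hx
    have hxs : x ∈ s := hs's hx
    have hxgood : (x ∈ s → DifferentiableWithinAt ℝ f s x) ∧
        Tendsto (fun r => volume (s ∩ closedBall x r) / volume (closedBall x r)) (𝓝[>] 0)
          (𝓝 (s.indicator 1 x)) := by
      by_contra h
      exact hx.2 (subset_toMeasurable _ _ h)
    have hdiff : DifferentiableWithinAt ℝ f s x := hxgood.1 hxs
    have hDtend := hxgood.2
    rw [indicator_of_mem hxs] at hDtend
    simp only [Pi.one_apply] at hDtend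
    set L' := fderivWithin ℝ f s x with hL'_def
    have hL' : HasFDerivWithinAt f L' s x := hdiff.hasFDerivWithinAt
    obtain ⟨S, hSm, hSd, hSq⟩ := hP x hxs
    set W : Set (Em n) := S ∩ s with hW_def
    have hWs : W \ {x} ⊆ S \ {x} := diff_subset_diff_left inter_subset_left
    have hWs' : W \ {x} ⊆ s := diff_subset.trans inter_subset_right
    -- density of W at x
    have hdW : ∀ γ : ℝ≥0∞, 0 < γ → ∀ᶠ r in 𝓝[>] (0:ℝ),
        volume (ball x r \ W) ≤ γ * volume (ball x r) := by
      intro γ hγ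
      have hγ2 : (0:ℝ≥0∞) < γ / 2 := ENNReal.div_pos hγ.ne' ENNReal.ofNat_ne_top
      have hS2 := density_compl_bound hSm (eventually_ball_ok x) hSd hγ2
      have hs2 := density_compl_bound hs (eventually_closedBall_ok x) hDtend hγ2
      filter_upwards [hS2, hs2] with r h1' h2'
      have hsplit : ball x r \ W = (ball x r \ S) ∪ (ball x r \ s) := by
        rw [hW_def, diff_inter]
      have hcb : volume (ball x r \ s) ≤ γ / 2 * volume (ball x r) := by
        rcases subsingleton_or_nontrivial (Em n) with hsub | hnt
        · have hemp : ball x r \ s = ∅ := by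
            apply eq_empty_of_forall_notMem
            intro z hz
            have hzx : z = x := Subsingleton.elim z x
            rw [hzx] at hz
            exact hz.2 hxs
          simp [hemp]
        · have hb : ball x r \ s ⊆ closedBall x r \ s :=
            diff_subset_diff_left ball_subset_closedBall
          calc volume (ball x r \ s) ≤ volume (closedBall x r \ s) := measure_mono hb
          _ ≤ γ / 2 * volume (closedBall x r) := h2'
          _ = γ / 2 * volume (ball x r) := by
              rw [Measure.addHaar_closedBall_eq_addHaar_ball]
      calc volume (ball x r \ W)
          ≤ volume (ball x r \ S) + volume (ball x r \ s) := by
            rw [hsplit]; exact measure_union_le _ _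
      _ ≤ γ / 2 * volume (ball x r) + γ / 2 * volume (ball x r) := add_le_add h1' hcb
      _ = γ * volume (ball x r) := by rw [← add_mul, ENNReal.add_halves]
    -- two approximate derivatives along W \ {x}
    have q1 : Tendsto (fun y => ‖f y - f x - Df x (y - x)‖ / ‖y - x‖)
        (𝓝[W \ {x}] x) (𝓝 0) :=
      hSq.mono_left (nhdsWithin_mono x hWs)
    have q2 : Tendsto (fun y => ‖f y - f x - L' (y - x)‖ / ‖y - x‖)
        (𝓝[W \ {x}] x) (𝓝 0) := by
      have ht := hasFDerivWithinAt_iff_tendsto.1 hL'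
      have h' := ht.mono_left (nhdsWithin_mono x hWs')
      exact Tendsto.congr (fun y => (div_eq_inv_mul _ _).symm) h'
    have qdiff : Tendsto (fun y => ‖(L' - Df x) (y - x)‖ / ‖y - x‖)
        (𝓝[W \ {x}] x) (𝓝 0) := by
      have hsum := q1.add q2
      rw [add_zero] at hsum
      refine squeeze_zero' (Eventually.of_forall fun y => by positivity)
        (Eventually.of_forall fun y => ?_) hsum
      rcases eq_or_ne y x with rfl | hyx
      · simp
      · have hy0 : 0 < ‖y - x‖ := by rw [norm_pos_iff, sub_ne_zero]; exact hyx
        have hnorm : ‖(L' - Df x) (y - x)‖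
            ≤ ‖f y - f x - Df x (y - x)‖ + ‖f y - f x - L' (y - x)‖ := by
          have hid : (L' - Df x) (y - x)
              = (f y - f x - Df x (y - x)) - (f y - f x - L' (y - x)) := by
            simp only [ContinuousLinearMap.sub_apply]
            abel
          rw [hid]
          exact norm_sub_le _ _
        rw [← add_div]
        gcongr
    have hzero : L' - Df x = 0 := approx_eq_zero_of_density hdW qdiff
    have heq : Df x = L' := (sub_eq_zero.1 hzero).symm
    rw [heq]
    exact hL'.mono hs's
  have hae : s =ᵐ[volume] s' := by
    rw [ae_eq_set]
    refine ⟨hss', ?_⟩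
    rw [diff_eq_empty.2 hs's]
    exact measure_empty
  calc ∫⁻ x in s, ENNReal.ofReal |(Df x).det| ∂volume
      = ∫⁻ x in s', ENNReal.ofReal |(Df x).det| ∂volume := by
        rw [Measure.restrict_congr_set hae]
  _ = volume (f '' s') :=
        lintegral_abs_det_fderiv_eq_addHaar_image volume hs'm hderiv (hinj.mono hs's)
  _ ≤ volume (f '' s) := measure_mono (Set.image_mono hs's)

lemma compact_box (b : ℕ → ℕ) : IsCompact {x : ℕ → ℕ | ∀ i, x i ≤ b i} := by
  have h : {x : ℕ → ℕ | ∀ i, x i ≤ b i} = Set.pi univ (fun i => Iic (b i)) := by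
    ext x
    simp [Set.mem_pi, Pi.le_def]
  rw [h]
  exact isCompact_univ_pi (fun i => (Set.finite_Iic (b i)).isCompact)

/-- Capacitability: an analytic set is inner regular by compact sets for finite measures. -/
lemma analytic_inner_compact {A : Set (Em n)} (g : (ℕ → ℕ) → Em n) (hg : Continuous g)
    (hA : range g = A) (μ : Measure (Em n)) [IsFiniteMeasure μ] {ε : ℝ≥0∞} (hε : 0 < ε) :
    ∃ K : Set (Em n), IsCompact K ∧ K ⊆ A ∧ μ A ≤ μ K + ε := by
  have key : ∀ (D : Set (ℕ → ℕ)) (k : ℕ), ∃ m : ℕ,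
      μ (g '' D) ≤ μ (g '' (D ∩ {x | x k ≤ m})) + ε / 2 ^ (k + 1) := by
    intro D k
    have hmono : Monotone (fun m : ℕ => g '' (D ∩ {x | x k ≤ m})) := by
      intro a b hab
      exact Set.image_mono (inter_subset_inter_right _ (fun x hx => le_trans hx hab))
    have hUeq' : (⋃ m : ℕ, (D ∩ {x | x k ≤ m})) = D := by
      apply subset_antisymm
      · exact iUnion_subset fun m => inter_subset_left
      · intro x hx
        exact mem_iUnion.2 ⟨x k, hx, show x k ≤ x k from le_rfl⟩
    have hUeq : (⋃ m : ℕ, g '' (D ∩ {x | x k ≤ m})) = g '' D := by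
      rw [← image_iUnion, hUeq']
    have hsup := hmono.measure_iUnion (μ := μ)
    rw [hUeq] at hsup
    have hδ0 : (0:ℝ≥0∞) < ε / 2 ^ (k + 1) := by
      apply ENNReal.div_pos hε.ne'
      exact ENNReal.pow_ne_top ENNReal.ofNat_ne_top
    rcases le_or_gt (μ (g '' D)) (ε / 2 ^ (k + 1)) with h | h
    · exact ⟨0, le_trans h le_add_self⟩
    · have hfin : ε / 2 ^ (k + 1) ≠ ∞ := (h.trans (measure_lt_top μ _)).ne
      have hδlt : μ (g '' D) - ε / 2 ^ (k + 1) < μ (g '' D) :=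
        ENNReal.sub_lt_self (measure_ne_top μ _) (hδ0.trans h).ne' hδ0.ne'
      rw [hsup] at hδlt
      obtain ⟨m, hm⟩ := lt_iSup_iff.1 hδlt
      rw [← hsup] at hm
      exact ⟨m, ((ENNReal.sub_lt_iff_lt_right hfin h.le).1 hm).le⟩
  choose Fc hFc using key
  -- recursively defined constraint sets
  set D : ℕ → Set (ℕ → ℕ) :=
    fun k => Nat.rec univ (fun k Dk => Dk ∩ {x | x k ≤ Fc Dk k}) k with hD_def
  have hD0 : D 0 = univ := rfl
  have hDs : ∀ k, D (k + 1) = D k ∩ {x | x k ≤ Fc (D k) k} := fun k => rfl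
  set φ : ℕ → ℕ := fun k => Fc (D k) k with hφ_def
  have hDanti : Antitone D := antitone_nat_of_succ_le (fun k => by
    rw [hDs]; exact inter_subset_left)
  have hDchar : ∀ k, D k = {x | ∀ i < k, x i ≤ φ i} := by
    intro k
    induction k with
    | zero =>
      rw [hD0]
      ext x
      simp
    | succ k ih =>
      ext x
      rw [hDs]
      simp only [mem_inter_iff, mem_setOf_eq]
      have ihx : x ∈ D k ↔ ∀ i < k, x i ≤ φ i := by rw [ih]; exact Iff.rfl
      constructor
      · rintro ⟨h1, h2⟩ i hi
        rcases Nat.lt_succ_iff_lt_or_eq.1 hi with h | rfl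
        · exact (ihx.1 h1) i h
        · exact h2
      · intro h
        exact ⟨ihx.2 (fun i hi => h i (hi.trans (Nat.lt_succ_self k))),
          h k (Nat.lt_succ_self k)⟩
  have hDbound : ∀ k, μ (g '' univ)
      ≤ μ (g '' D k) + ∑ i ∈ Finset.range k, ε / 2 ^ (i + 1) := by
    intro k
    induction k with
    | zero => simp [hD0]
    | succ k ih =>
      calc μ (g '' univ) ≤ μ (g '' D k) + ∑ i ∈ Finset.range k, ε / 2 ^ (i + 1) := ih
      _ ≤ (μ (g '' D (k + 1)) + ε / 2 ^ (k + 1)) + ∑ i ∈ Finset.range k, ε / 2 ^ (i + 1) := by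
          apply add_le_add_left
          rw [hDs]
          exact hFc (D k) k
      _ = μ (g '' D (k + 1)) + ∑ i ∈ Finset.range (k + 1), ε / 2 ^ (i + 1) := by
          rw [Finset.sum_range_succ]
          ring
  have hsum_le : ∀ k, (∑ i ∈ Finset.range k, ε / 2 ^ (i + 1)) ≤ ε := by
    intro k
    refine le_trans (ENNReal.sum_le_tsum _) (le_of_eq ?_)
    have hterm : ∀ i : ℕ, ε / 2 ^ (i + 1) = ε * 2⁻¹ * (2⁻¹ : ℝ≥0∞) ^ i := by
      intro i
      rw [div_eq_mul_inv, pow_succ,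
        ENNReal.mul_inv (Or.inl (by norm_num)) (Or.inl (by norm_num)), ENNReal.inv_pow]
      ring
    calc (∑' i : ℕ, ε / 2 ^ (i + 1)) = ∑' i : ℕ, ε * 2⁻¹ * (2⁻¹ : ℝ≥0∞) ^ i :=
          tsum_congr hterm
    _ = ε * 2⁻¹ * ∑' i : ℕ, (2⁻¹ : ℝ≥0∞) ^ i := ENNReal.tsum_mul_left
    _ = ε * 2⁻¹ * 2 := by
        rw [ENNReal.tsum_geometric, ENNReal.one_sub_inv_two, inv_inv]
    _ = ε := by
        rw [mul_assoc, ENNReal.inv_mul_cancel (by norm_num) (by norm_num), mul_one]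
  set C : Set (ℕ → ℕ) := {x | ∀ i, x i ≤ φ i} with hC_def
  have hCcomp : IsCompact C := compact_box φ
  have hKA : g '' C ⊆ A := by
    rw [← hA]
    exact image_subset_range _ _
  refine ⟨g '' C, hCcomp.image hg, hKA, ?_⟩
  have hCl : ∀ k, NullMeasurableSet (closure (g '' D k)) μ :=
    fun k => isClosed_closure.measurableSet.nullMeasurableSet
  have hanti : Antitone (fun k => closure (g '' D k)) :=
    fun a b hab => closure_mono (Set.image_mono (hDanti hab))
  have hInter : μ (⋂ k, closure (g '' D k)) = ⨅ k, μ (closure (g '' D k)) :=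
    hanti.measure_iInter hCl ⟨0, measure_ne_top μ _⟩
  have hsub : (⋂ k, closure (g '' D k)) ⊆ g '' C := by
    intro y hy
    have hchoose : ∀ k : ℕ, ∃ x ∈ D k, dist y (g x) < 1 / (k + 1) := by
      intro k
      have hyk : y ∈ closure (g '' D k) := mem_iInter.1 hy k
      obtain ⟨z, hz1, hz2⟩ := Metric.mem_closure_iff.1 hyk (1 / (k + 1)) (by positivity)
      obtain ⟨x, hx, rfl⟩ := hz1
      exact ⟨x, hx, hz2⟩
    choose xs hxs hdxs using hchoose
    set ψ : ℕ → ℕ := fun i =>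
      max (φ i) (Finset.sup (Finset.range (i + 1)) (fun k => xs k i)) with hψ_def
    have hxsmem : ∀ k, xs k ∈ {x : ℕ → ℕ | ∀ i, x i ≤ ψ i} := by
      intro k i
      rcases lt_or_ge i k with h | h
      · have hmem := hxs k
        rw [hDchar k] at hmem
        exact le_trans (hmem i h) (le_max_left _ _)
      · exact le_trans (Finset.le_sup (f := fun k' => xs k' i)
          (Finset.mem_range.2 (Nat.lt_succ_of_le h))) (le_max_right _ _)
    obtain ⟨a, haC', θ, hθmono, hθtend⟩ := (compact_box ψ).tendsto_subseq hxsmem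
    have haDk : ∀ k, a ∈ D k := by
      intro k
      have hclosed : IsClosed (D k) := by
        rw [hDchar]
        have hiter : {x : ℕ → ℕ | ∀ i < k, x i ≤ φ i}
            = ⋂ (i : ℕ) (_ : i < k), {x : ℕ → ℕ | x i ≤ φ i} := by
          ext x
          simp
        rw [hiter]
        exact isClosed_iInter fun i => isClosed_iInter fun _ =>
          IsClosed.preimage (continuous_apply i) isClosed_Iic
      refine hclosed.mem_of_tendsto hθtend ?_
      filter_upwards [eventually_ge_atTop k] with j hj
      have hθj : k ≤ θ j := le_trans hj hθmono.le_apply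
      exact hDanti hθj (hxs (θ j))
    have haC : a ∈ C := by
      intro i
      have hmem := haDk (i + 1)
      rw [hDchar (i + 1)] at hmem
      exact hmem i (Nat.lt_succ_self i)
    have hga : Tendsto (fun j => g (xs (θ j))) atTop (𝓝 (g a)) :=
      (hg.continuousAt.tendsto).comp hθtend
    have hgy : Tendsto (fun j => g (xs (θ j))) atTop (𝓝 y) := by
      apply tendsto_iff_dist_tendsto_zero.2
      apply squeeze_zero (fun j => dist_nonneg) (g := fun j : ℕ => 1 / ((j : ℝ) + 1))
      · intro j
        have h1 : dist (g (xs (θ j))) y < 1 / ((θ j : ℝ) + 1) := by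
          rw [dist_comm]
          exact hdxs (θ j)
        have h2 : 1 / ((θ j : ℝ) + 1) ≤ 1 / ((j : ℝ) + 1) := by
          have hj : (j : ℕ) ≤ θ j := hθmono.le_apply
          have hj' : ((j : ℝ) + 1) ≤ ((θ j : ℝ) + 1) := by
            have := (Nat.cast_le (α := ℝ)).2 hj
            linarith
          exact one_div_le_one_div_of_le (by positivity) hj'
        exact h1.le.trans h2
      · exact tendsto_one_div_add_atTop_nhds_zero_nat
    exact ⟨a, haC, tendsto_nhds_unique hga hgy⟩
  have hfinal : ∀ k, μ (g '' univ) ≤ μ (closure (g '' D k)) + ε := fun k =>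
    (hDbound k).trans (add_le_add (measure_mono subset_closure) (hsum_le k))
  calc μ A = μ (g '' univ) := by rw [image_univ, hA]
  _ ≤ ⨅ k, (μ (closure (g '' D k)) + ε) := le_iInf hfinal
  _ = (⨅ k, μ (closure (g '' D k))) + ε := ENNReal.iInf_add.symm
  _ = μ (⋂ k, closure (g '' D k)) + ε := by rw [hInter]
  _ ≤ μ (g '' C) + ε := add_le_add_left (measure_mono hsub) _

/-- Suslin: analytic sets are Lebesgue null measurable. -/
lemma AnalyticSet.nullMeasurable {A : Set (Em n)} (hA : MeasureTheory.AnalyticSet A) :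
    NullMeasurableSet A (volume : Measure (Em n)) := by
  rw [MeasureTheory.AnalyticSet_def] at hA
  rcases hA with rfl | ⟨g, hgc, hgr⟩
  · exact MeasurableSet.empty.nullMeasurableSet
  · have hcover : A = ⋃ m : ℕ, A ∩ ball (0 : Em n) (m + 1) := by
      ext x
      simp only [mem_iUnion, mem_inter_iff]
      constructor
      · intro hx
        obtain ⟨m, hm⟩ := exists_nat_gt (dist x 0)
        exact ⟨m, hx, mem_ball.2 (hm.trans (lt_add_one _))⟩
      · rintro ⟨m, hm, -⟩
        exact hm
    rw [hcover]
    apply NullMeasurableSet.iUnion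
    intro m
    set μm := volume.restrict (ball (0 : Em n) ((m : ℝ) + 1)) with hμm
    haveI : IsFiniteMeasure μm := ⟨by
      rw [hμm, Measure.restrict_apply MeasurableSet.univ, univ_inter]
      exact measure_ball_lt_top⟩
    have hKex : ∀ j : ℕ, ∃ K : Set (Em n), IsCompact K ∧ K ⊆ A ∧
        μm A ≤ μm K + 1 / (j + 1) := by
      intro j
      apply analytic_inner_compact g hgc hgr μm
      apply ENNReal.div_pos one_ne_zero
      exact ENNReal.add_ne_top.2 ⟨ENNReal.natCast_ne_top j, ENNReal.one_ne_top⟩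
    choose K hKc hKA hKb using hKex
    set S := ⋃ j, K j with hS_def
    have hSm : MeasurableSet S :=
      MeasurableSet.iUnion (fun j => (hKc j).isClosed.measurableSet)
    have hSA : S ⊆ A := iUnion_subset hKA
    have hle : μm A ≤ μm S := by
      apply ENNReal.le_of_forall_pos_le_add
      intro δ hδ hfin
      obtain ⟨j, hj⟩ := ENNReal.exists_inv_nat_lt
        (show (δ : ℝ≥0∞) ≠ 0 by exact_mod_cast hδ.ne')
      calc μm A ≤ μm (K j) + 1 / (j + 1) := hKb j
      _ ≤ μm S + δ := by
          apply add_le_add (measure_mono (subset_iUnion K j))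
          calc (1 : ℝ≥0∞) / (j + 1) = ((j : ℝ≥0∞) + 1)⁻¹ := one_div _
          _ ≤ ((j : ℝ≥0∞))⁻¹ := ENNReal.inv_le_inv.2 le_self_add
          _ ≤ δ := hj.le
    have hnull : volume ((A \ S) ∩ ball (0 : Em n) ((m : ℝ) + 1)) = 0 := by
      have h1 : μm (A \ S) ≤ μm (toMeasurable μm A \ S) :=
        measure_mono (diff_subset_diff_left (subset_toMeasurable _ _))
      have h2 : μm (toMeasurable μm A \ S) = μm (toMeasurable μm A) - μm S :=
        measure_diff (hSA.trans (subset_toMeasurable _ _)) hSm.nullMeasurableSet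
          (measure_ne_top μm S)
      rw [h2, measure_toMeasurable, tsub_eq_zero_of_le hle] at h1
      have h3 : μm (A \ S) = 0 := le_antisymm h1 zero_le
      rwa [hμm, Measure.restrict_apply' measurableSet_ball] at h3
    have hdecomp : A ∩ ball (0 : Em n) ((m : ℝ) + 1)
        = (S ∩ ball (0 : Em n) ((m : ℝ) + 1)) ∪ ((A \ S) ∩ ball (0 : Em n) ((m : ℝ) + 1)) := by
      rw [← union_inter_distrib_right, union_diff_cancel hSA]
    rw [hdecomp]
    exact ((hSm.inter measurableSet_ball).nullMeasurableSet).union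
      (NullMeasurableSet.of_null hnull)


theorem stmt5 {n : ℕ} (Ω : Set (Em n)) (hΩ : IsOpen Ω)
    (f : Em n → Em n) (hf : ContinuousOn f Ω)
    (Df : Em n → Em n →L[ℝ] Em n)
    (hDf : ∀ᵐ x ∂(volume.restrict Ω), HasApproxDerivAt f (Df x) x)
    (hinj : InjectiveAE f Ω) :
    ∀ E ⊆ Ω, MeasurableSet E →
      NullMeasurableSet (f '' E) volume ∧
      ∫⁻ x in E, ENNReal.ofReal |(Df x).det| ≤ volume (f '' E) := by
  intro E hEΩ hEm
  obtain ⟨N, hNΩ, hN0, hNinj⟩ := hinj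
  set N' := toMeasurable volume N with hN'_def
  have hN'0 : volume N' = 0 := by rw [measure_toMeasurable]; exact hN0
  have hN'm : MeasurableSet N' := measurableSet_toMeasurable _ _
  set T := toMeasurable (volume.restrict Ω) {x | ¬ HasApproxDerivAt f (Df x) x} with hT_def
  have hTm : MeasurableSet T := measurableSet_toMeasurable _ _
  have hT0 : volume (T ∩ Ω) = 0 := by
    have h1 : volume.restrict Ω T = 0 := by
      rw [hT_def, measure_toMeasurable]
      exact ae_iff.1 hDf
    rwa [Measure.restrict_apply hTm] at h1
  set G := E \ (N' ∪ (T ∩ Ω)) with hG_def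
  have hGm : MeasurableSet G := hEm.diff (hN'm.union (hTm.inter hΩ.measurableSet))
  have hGE : G ⊆ E := diff_subset
  have hGΩ : G ⊆ Ω := hGE.trans hEΩ
  have hEG : volume (E \ G) = 0 := by
    have hsub : E \ G ⊆ N' ∪ (T ∩ Ω) := by
      intro x hx
      rcases hx with ⟨hx1, hx2⟩
      by_contra h
      exact hx2 ⟨hx1, h⟩
    exact measure_mono_null hsub (measure_union_null hN'0 hT0)
  have hGP : ∀ x ∈ G, HasApproxDerivAt f (Df x) x := by
    intro x hx
    by_contra h
    exact hx.2 (Or.inr ⟨subset_toMeasurable _ _ h, hEΩ hx.1⟩)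
  have hGinj : InjOn f G := by
    apply hNinj.mono
    intro x hx
    exact ⟨hGΩ hx, fun hN => hx.2 (Or.inl (subset_toMeasurable _ _ hN))⟩
  obtain ⟨u, hum, huG, hGu, hulip⟩ := federer_decomp hΩ hf hGm hGΩ hGP
  set t : ℕ → Set (Em n) := fun k => G ∩ disjointed u k with ht_def
  have htm : ∀ k, MeasurableSet (t k) := fun k => hGm.inter (MeasurableSet.disjointed hum k)
  have htd : Pairwise (Function.onFun Disjoint t) := fun i j hij =>
    ((disjoint_disjointed u) hij).mono inter_subset_right inter_subset_right
  have htu : G = ⋃ k, t k := by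
    calc G = G ∩ ⋃ k, u k := (inter_eq_left.2 hGu).symm
    _ = G ∩ ⋃ k, disjointed u k := by rw [iUnion_disjointed]
    _ = ⋃ k, G ∩ disjointed u k := inter_iUnion _ _
  have htsub : ∀ k, t k ⊆ G := fun k => inter_subset_left
  have htuk : ∀ k, t k ⊆ u k := fun k =>
    inter_subset_right.trans (disjointed_subset u k)
  have htim : ∀ k, MeasurableSet (f '' t k) := fun k =>
    (htm k).image_of_continuousOn_injOn (hf.mono ((htsub k).trans hGΩ))
      (hGinj.mono (htsub k))
  have htdisj_im : Pairwise (Function.onFun Disjoint fun k => f '' t k) := by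
    intro i j hij
    show Disjoint (f '' t i) (f '' t j)
    rw [disjoint_left]
    rintro y ⟨x1, hx1, rfl⟩ ⟨x2, hx2, hx12⟩
    have : x2 = x1 := hGinj (htsub j hx2) (htsub i hx1) hx12
    rw [this] at hx2
    exact (disjoint_left.1 (htd hij)) hx1 hx2
  have hEGae : E =ᵐ[volume] G := by
    rw [ae_eq_set]
    refine ⟨hEG, ?_⟩
    rw [diff_eq_empty.2 hGE]
    exact measure_empty
  constructor
  · -- null measurability of f '' E
    haveI := hΩ.polishSpace
    haveI : BorelSpace Ω := Subtype.borelSpace _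
    have hEm' : MeasurableSet (Subtype.val ⁻¹' E : Set Ω) :=
      hEm.preimage measurable_subtype_coe
    have hcont : Continuous (fun y : Ω => f y) := continuousOn_iff_continuous_restrict.1 hf
    have himeq : f '' E = (fun y : Ω => f y) '' (Subtype.val ⁻¹' E) := by
      ext y
      constructor
      · rintro ⟨x, hxE, rfl⟩
        exact ⟨⟨x, hEΩ hxE⟩, hxE, rfl⟩
      · rintro ⟨⟨x, hxΩ⟩, hxE, rfl⟩
        exact ⟨x, hxE, rfl⟩
    have hanal : MeasureTheory.AnalyticSet (f '' E) := by
      rw [himeq]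
      exact hEm'.analyticSet_image hcont.measurable
    exact AnalyticSet.nullMeasurable hanal
  · calc ∫⁻ x in E, ENNReal.ofReal |(Df x).det|
        = ∫⁻ x in G, ENNReal.ofReal |(Df x).det| := by
          rw [Measure.restrict_congr_set hEGae]
    _ = ∑' k, ∫⁻ x in t k, ENNReal.ofReal |(Df x).det| := by
          rw [htu, lintegral_iUnion htm htd]
    _ ≤ ∑' k, volume (f '' t k) := by
          apply ENNReal.tsum_le_tsum
          intro k
          obtain ⟨K, hK⟩ := hulip k
          exact piece_bound (htm k) (fun x hx => hGP x (htsub k hx))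
            (hK.mono (htuk k)) (hGinj.mono (htsub k))
    _ = volume (⋃ k, f '' t k) := (measure_iUnion htdisj_im htim).symm
    _ ≤ volume (f '' E) := by
          apply measure_mono
          exact iUnion_subset fun k => Set.image_mono ((htsub k).trans hGE)
end
end

section
/- Let Ω ⊆ ℝⁿ be open and f : Ω → ℝⁿ be a homeomorphism onto its image that is approximately differentiable almost everywhere. Then the approximate Jacobian J_a f is locally integrable on Ω. -/
open MeasureTheory Metric Filter Topology Set
open scoped ENNReal NNReal Topology

noncomputable section

variable {n : ℕ}

lemma density_quant {W : Set (Em n)} (hW : MeasurableSet W) (B : ℝ → Set (Em n))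
    (hpos : ∀ r, 0 < r → volume (B r) ≠ 0) (hfin : ∀ r, 0 < r → volume (B r) ≠ ⊤)
    (h : Tendsto (fun r => volume (W ∩ B r) / volume (B r)) (𝓝[>] (0:ℝ)) (𝓝 1))
    {γ : ℝ≥0∞} (hγ : 0 < γ) :
    ∃ r0 > (0:ℝ), ∀ r, 0 < r → r ≤ r0 → volume (B r \ W) ≤ γ * volume (B r) := by
  rcases le_or_gt 1 γ with hγ1 | hγ1
  · exact ⟨1, one_pos, fun r hr _ => le_trans (measure_mono diff_subset)
      (le_trans (by rw [one_mul]) (mul_le_mul_left hγ1 _))⟩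
  · have h1 : (1:ℝ≥0∞) - γ < 1 := ENNReal.sub_lt_self (by simp) (by simp) hγ.ne'
    have hev : ∀ᶠ r in 𝓝[>] (0:ℝ), (1:ℝ≥0∞) - γ < volume (W ∩ B r) / volume (B r) :=
      h.eventually_const_lt h1
    rcases mem_nhdsGT_iff_exists_Ioc_subset.1 hev with ⟨r0, hr0, hsub⟩
    refine ⟨r0, hr0, fun r hr hrr0 => ?_⟩
    have hmem : (1:ℝ≥0∞) - γ < volume (W ∩ B r) / volume (B r) := hsub ⟨hr, hrr0⟩
    set b := volume (B r) with hb
    have hb0 : b ≠ 0 := hpos r hr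
    have hbt : b ≠ ⊤ := hfin r hr
    have hlow : ((1:ℝ≥0∞) - γ) * b ≤ volume (W ∩ B r) := by
      have := (ENNReal.lt_div_iff_mul_lt (Or.inl hb0) (Or.inl hbt)).1 hmem
      exact this.le
    have hsplit : volume (B r ∩ W) + volume (B r \ W) = b := measure_inter_add_diff _ hW
    rw [inter_comm] at hsplit
    have hkey : volume (B r \ W) + ((1:ℝ≥0∞) - γ) * b ≤ γ * b + ((1:ℝ≥0∞) - γ) * b := by
      calc volume (B r \ W) + ((1:ℝ≥0∞) - γ) * b ≤ volume (B r \ W) + volume (W ∩ B r) :=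
            add_le_add_right hlow _
        _ = b := by rw [add_comm, hsplit]
        _ = 1 * b := (one_mul b).symm
        _ = (γ + (1 - γ)) * b := by rw [add_tsub_cancel_of_le hγ1.le]
        _ = γ * b + (1 - γ) * b := add_mul _ _ _
    have hfin2 : ((1:ℝ≥0∞) - γ) * b ≠ ⊤ := ENNReal.mul_ne_top (by simp) hbt
    exact (ENNReal.add_le_add_iff_right hfin2).1 hkey

lemma littleO_quant {f : Em n → Em n} {L : Em n →L[ℝ] Em n} {S : Set (Em n)} {x : Em n}
    (h : Tendsto (fun y => ‖f y - f x - L (y - x)‖ / ‖y - x‖) (𝓝[S \ {x}] x) (𝓝 0))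
    {ε : ℝ} (hε : 0 < ε) :
    ∃ r1 > (0:ℝ), ∀ w ∈ S, dist w x ≤ r1 → ‖f w - f x - L (w - x)‖ ≤ ε * ‖w - x‖ := by
  rcases (Metric.tendsto_nhdsWithin_nhds).1 h ε hε with ⟨δ, hδ, hδ'⟩
  refine ⟨δ/2, by linarith, fun w hw hwd => ?_⟩
  rcases eq_or_ne w x with rfl | hwx
  · simp
  · have h1 : w ∈ S \ {x} := ⟨hw, hwx⟩
    have h2 : dist w x < δ := lt_of_le_of_lt hwd (by linarith)
    have := hδ' h1 h2
    rw [Real.dist_eq, sub_zero] at this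
    have hnorm : (0:ℝ) < ‖w - x‖ := by
      rw [norm_pos_iff, sub_ne_zero]; exact hwx
    have habs : ‖f w - f x - L (w - x)‖ / ‖w - x‖ ≤ ε := by
      have : |‖f w - f x - L (w - x)‖ / ‖w - x‖| = ‖f w - f x - L (w - x)‖ / ‖w - x‖ :=
        abs_of_nonneg (div_nonneg (norm_nonneg _) (norm_nonneg _))
      linarith [this ▸ le_of_lt ‹|‖f w - f x - L (w - x)‖ / ‖w - x‖| < ε›]
    calc ‖f w - f x - L (w - x)‖ = (‖f w - f x - L (w - x)‖ / ‖w - x‖) * ‖w - x‖ := by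
          field_simp
      _ ≤ ε * ‖w - x‖ := by
          exact mul_le_mul_of_nonneg_right habs (norm_nonneg _)

lemma find_point {B W₁ W₂ : Set (Em n)} (hW₁ : MeasurableSet W₁) (hW₂ : MeasurableSet W₂)
    (h : volume (B \ W₁) + volume (B \ W₂) < volume B) : (B ∩ (W₁ ∩ W₂)).Nonempty := by
  apply nonempty_of_measure_ne_zero (μ := volume)
  intro h0
  have hsplit : volume (B ∩ (W₁ ∩ W₂)) + volume (B \ (W₁ ∩ W₂)) = volume B :=
    measure_inter_add_diff _ (hW₁.inter hW₂)
  rw [h0, zero_add] at hsplit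
  have : volume (B \ (W₁ ∩ W₂)) ≤ volume (B \ W₁) + volume (B \ W₂) := by
    rw [diff_inter]
    exact measure_union_le _ _
  rw [hsplit] at this
  exact absurd (lt_of_le_of_lt this h) (lt_irrefl _)

noncomputable def sgm (n : ℕ) : ℝ≥0∞ := ENNReal.ofReal ((2 ^ (n+1) + 4 : ℝ))⁻¹

def Piece (f : Em n → Em n) (Df : Em n → Em n →L[ℝ] Em n) (S : Em n → Set (Em n))
    (T : Em n →L[ℝ] Em n) (ε R : ℝ) : Set (Em n) :=
  {x | ‖Df x - T‖ ≤ ε ∧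
       (∀ r : ℝ, 0 < r → r ≤ R → volume (ball x r \ S x) ≤ sgm n * volume (ball x r)) ∧
       (∀ w ∈ S x, dist w x ≤ R → ‖f w - f x - Df x (w - x)‖ ≤ ε * ‖w - x‖)}

lemma sgm_ball_lt [Nontrivial (Em n)] (x y : Em n) {ρ : ℝ} (hρ : 0 < ρ) :
    sgm n * volume (ball x (2*ρ)) + sgm n * volume (ball y ρ) < volume (ball y ρ) := by
  have hv0 : volume (ball (0 : Em n) 1) ≠ 0 := (measure_ball_pos _ _ one_pos).ne'
  have hvt : volume (ball (0 : Em n) 1) ≠ ⊤ := measure_ball_lt_top.ne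
  rw [Measure.addHaar_ball volume x (by linarith), Measure.addHaar_ball volume y hρ.le,
    finrank_euclideanSpace_fin]
  set v := volume (ball (0 : Em n) 1)
  set s : ℝ := ((2 : ℝ) ^ (n+1) + 4)⁻¹ with hs
  have hs0 : 0 < s := by positivity
  have h2n : (0:ℝ) < 2 ^ n := by positivity
  have hρn : (0:ℝ) < ρ ^ n := by positivity
  have hreal : s * (2*ρ) ^ n + s * ρ ^ n < ρ ^ n := by
    have h1 : (2*ρ) ^ n = 2 ^ n * ρ ^ n := by rw [mul_pow]
    have h2 : s * ((2:ℝ) ^ n + 1) < 1 := by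
      rw [hs, inv_mul_lt_iff₀ (by positivity)]
      have : (2:ℝ) ^ (n+1) = 2 * 2 ^ n := by ring
      nlinarith
    nlinarith
  have hcomb : sgm n * (ENNReal.ofReal ((2*ρ) ^ n) * v) + sgm n * (ENNReal.ofReal (ρ ^ n) * v)
      = ENNReal.ofReal (s * (2*ρ) ^ n + s * ρ ^ n) * v := by
    rw [sgm]
    rw [← mul_assoc, ← mul_assoc, ← ENNReal.ofReal_mul hs0.le, ← ENNReal.ofReal_mul hs0.le,
      ← add_mul, ← ENNReal.ofReal_add (by positivity) (by positivity)]
  rw [hcomb]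
  apply ENNReal.mul_lt_mul_left hv0 hvt
  exact ENNReal.ofReal_lt_ofReal_iff hρn |>.mpr hreal

lemma find_point' {B W₁ W₂ : Set (Em n)} (hW₁ : MeasurableSet W₁) (hW₂ : MeasurableSet W₂)
    (h : volume (B \ W₁) + volume (B \ W₂) < volume B) : (B ∩ (W₁ ∩ W₂)).Nonempty := by
  apply nonempty_of_measure_ne_zero (μ := volume)
  intro h0
  have hsplit : volume (B ∩ (W₁ ∩ W₂)) + volume (B \ (W₁ ∩ W₂)) = volume B :=
    measure_inter_add_diff _ (hW₁.inter hW₂)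
  rw [h0, zero_add] at hsplit
  have h2 : volume (B \ (W₁ ∩ W₂)) ≤ volume (B \ W₁) + volume (B \ W₂) := by
    rw [diff_inter]; exact measure_union_le _ _
  rw [hsplit] at h2
  exact absurd (lt_of_le_of_lt h2 h) (lt_irrefl _)

lemma piece_two_point [Nontrivial (Em n)] {f : Em n → Em n} {Df : Em n → Em n →L[ℝ] Em n}
    {S : Em n → Set (Em n)} (hSm : ∀ x, MeasurableSet (S x))
    {T : Em n →L[ℝ] Em n} {ε R : ℝ} (hε : 0 ≤ ε)
    {x y : Em n} (hx : x ∈ Piece f Df S T ε R) (hy : y ∈ Piece f Df S T ε R)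
    (hd : 3 * dist x y ≤ R) :
    ‖f x - f y - T (x - y)‖ ≤ 6 * ε * ‖x - y‖ := by
  rcases eq_or_ne x y with rfl | hxy
  · simp
  · set ρ := dist x y with hρdef
    have hρ : 0 < ρ := dist_pos.2 hxy
    have hsub : ball y ρ \ S x ⊆ ball x (2*ρ) \ S x := by
      intro w hw
      refine ⟨?_, hw.2⟩
      have : dist w x ≤ dist w y + dist y x := dist_triangle _ _ _
      have hwy : dist w y < ρ := mem_ball.1 hw.1
      have : dist w x < 2 * ρ := by rw [dist_comm y x] at this; linarith
      exact mem_ball.2 this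
    have hden_x := hx.2.1 (2*ρ) (by linarith) (by linarith)
    have hden_y := hy.2.1 ρ hρ (by linarith)
    have hlt : volume (ball y ρ \ S x) + volume (ball y ρ \ S y) < volume (ball y ρ) := by
      calc volume (ball y ρ \ S x) + volume (ball y ρ \ S y)
          ≤ sgm n * volume (ball x (2*ρ)) + sgm n * volume (ball y ρ) :=
            add_le_add (le_trans (measure_mono hsub) hden_x) hden_y
        _ < volume (ball y ρ) := sgm_ball_lt x y hρ
    obtain ⟨z, hzB, hzx, hzy⟩ := find_point' (hSm x) (hSm y) hlt
    have hzyd : dist z y < ρ := mem_ball.1 hzB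
    have hzxd : dist z x < 2 * ρ := by
      have := dist_triangle z y x
      rw [dist_comm y x] at this; linarith
    have h1 : ‖f z - f x - Df x (z - x)‖ ≤ ε * (2 * ρ) := by
      refine le_trans (hx.2.2 z hzx (by linarith)) ?_
      rw [← dist_eq_norm]
      exact mul_le_mul_of_nonneg_left (by linarith) hε
    have h2 : ‖f z - f y - Df y (z - y)‖ ≤ ε * ρ := by
      refine le_trans (hy.2.2 z hzy (by linarith)) ?_
      rw [← dist_eq_norm]
      exact mul_le_mul_of_nonneg_left (by linarith) hε
    have h3 : ‖(Df x - T) (z - x)‖ ≤ ε * (2 * ρ) := by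
      refine le_trans ((Df x - T).le_opNorm _) ?_
      have := hx.1
      have hn : ‖z - x‖ ≤ 2 * ρ := by rw [← dist_eq_norm]; linarith
      exact mul_le_mul this hn (norm_nonneg _) hε
    have h4 : ‖(Df y - T) (z - y)‖ ≤ ε * ρ := by
      refine le_trans ((Df y - T).le_opNorm _) ?_
      have hn : ‖z - y‖ ≤ ρ := by rw [← dist_eq_norm]; linarith
      exact mul_le_mul hy.1 hn (norm_nonneg _) hε
    have key : f x - f y - T (x - y) =
        (-(f z - f x - Df x (z - x))) + (f z - f y - Df y (z - y)) +
          ((Df y - T) (z - y) - (Df x - T) (z - x)) := by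
      simp only [ContinuousLinearMap.sub_apply, map_sub]
      abel
    calc ‖f x - f y - T (x - y)‖
        ≤ ‖-(f z - f x - Df x (z - x))‖ + ‖f z - f y - Df y (z - y)‖ +
            ‖(Df y - T) (z - y) - (Df x - T) (z - x)‖ := by
          rw [key]; exact norm_add₃_le
      _ ≤ ε * (2*ρ) + ε * ρ + (ε * ρ + ε * (2*ρ)) := by
          have h5 : ‖(Df y - T) (z - y) - (Df x - T) (z - x)‖ ≤ ε * ρ + ε * (2*ρ) :=
            le_trans (norm_sub_le _ _) (add_le_add h4 h3)
          rw [norm_neg]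
          exact add_le_add (add_le_add h1 h2) h5
      _ = 6 * ε * ρ := by ring
      _ = 6 * ε * ‖x - y‖ := by rw [hρdef, dist_eq_norm]

lemma piece_closure_approx [Nontrivial (Em n)] {f : Em n → Em n} {Df : Em n → Em n →L[ℝ] Em n}
    {S : Em n → Set (Em n)} (hSm : ∀ x, MeasurableSet (S x))
    {T : Em n →L[ℝ] Em n} {ε R : ℝ} (hε : 0 ≤ ε)
    {Ω : Set (Em n)} (hΩ : IsOpen Ω) (hcont : ContinuousOn f Ω) (c : Em n) :
    ApproximatesLinearOn f T
      (closure (Piece f Df S T ε R ∩ closedBall c (R/6)) ∩ Ω) (6*ε).toNNReal := by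
  intro x hx y hy
  have hcoe : ((6*ε).toNNReal : ℝ) = 6*ε := Real.coe_toNNReal _ (by linarith)
  rw [hcoe]
  obtain ⟨u, hu, hu_tend⟩ := mem_closure_iff_seq_limit.1 hx.1
  obtain ⟨v, hv, hv_tend⟩ := mem_closure_iff_seq_limit.1 hy.1
  have hfx : Tendsto (fun m => f (u m)) atTop (𝓝 (f x)) :=
    ((hcont.continuousAt (hΩ.mem_nhds hx.2)).tendsto).comp hu_tend
  have hfy : Tendsto (fun m => f (v m)) atTop (𝓝 (f y)) :=
    ((hcont.continuousAt (hΩ.mem_nhds hy.2)).tendsto).comp hv_tend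
  have hTm : Tendsto (fun m => T (u m - v m)) atTop (𝓝 (T (x - y))) :=
    (T.continuous.tendsto _).comp (hu_tend.sub hv_tend)
  have hlhs : Tendsto (fun m => ‖f (u m) - f (v m) - T (u m - v m)‖) atTop
      (𝓝 ‖f x - f y - T (x - y)‖) := ((hfx.sub hfy).sub hTm).norm
  have hrhs : Tendsto (fun m => 6*ε*‖u m - v m‖) atTop (𝓝 (6*ε*‖x - y‖)) :=
    ((hu_tend.sub hv_tend).norm).const_mul _
  refine le_of_tendsto_of_tendsto' hlhs hrhs fun m => ?_
  have hdist : 3 * dist (u m) (v m) ≤ R := by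
    have h1 : dist (u m) c ≤ R/6 := mem_closedBall.1 (hu m).2
    have h2 : dist (v m) c ≤ R/6 := mem_closedBall.1 (hv m).2
    have := dist_triangle (u m) c (v m)
    rw [dist_comm c (v m)] at this
    linarith
  exact piece_two_point hSm hε (hu m).1 (hv m).1 hdist

lemma density_point_norm_le [Nontrivial (Em n)] {f : Em n → Em n}
    {L T : Em n →L[ℝ] Em n} {ε : ℝ} (hε : 0 < ε)
    {t : Set (Em n)} (happrox : ApproximatesLinearOn f T t (6*ε).toNNReal)
    {x : Em n} (hxt : x ∈ t) (htm : MeasurableSet t)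
    (hdens : Tendsto (fun r => volume (t ∩ closedBall x r) / volume (closedBall x r))
      (𝓝[>] (0:ℝ)) (𝓝 1))
    {S : Set (Em n)} (hSm : MeasurableSet S)
    (hSdens : Tendsto (fun r : ℝ => volume (S ∩ ball x r) / volume (ball x r))
      (𝓝[>] (0:ℝ)) (𝓝 1))
    (hlittle : Tendsto (fun y => ‖f y - f x - L (y - x)‖ / ‖y - x‖) (𝓝[S \ {x}] x) (𝓝 0)) :
    ‖L - T‖ ≤ 14 * ε := by
  have hcoe : ((6*ε).toNNReal : ℝ) = 6*ε := Real.coe_toNNReal _ (by linarith)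
  have main : ∀ ε' > (0:ℝ), ‖L - T‖ ≤ 12*ε + 2*ε' := by
    intro ε' hε'
    set ηr : ℝ := ((6:ℝ)^n * 4)⁻¹ with hηr
    have hηr0 : 0 < ηr := by positivity
    have hη0 : 0 < ENNReal.ofReal ηr := ENNReal.ofReal_pos.2 hηr0
    obtain ⟨r0, hr00, hr0⟩ := density_quant htm (closedBall x)
      (fun r hr => (measure_closedBall_pos _ _ hr).ne')
      (fun r _ => measure_closedBall_lt_top.ne) hdens hη0
    obtain ⟨r0', hr00', hr0'⟩ := density_quant hSm (ball x)
      (fun r hr => (measure_ball_pos _ _ hr).ne')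
      (fun r _ => measure_ball_lt_top.ne) hSdens hη0
    obtain ⟨r1, hr10, hr1⟩ := littleO_quant hlittle hε'
    set r : ℝ := (min (min r0 r0') r1)/2 with hrdef
    have hr : 0 < r := by
      apply div_pos _ two_pos
      exact lt_min (lt_min hr00 hr00') hr10
    have h2r0 : 2*r ≤ r0 := by
      have : min (min r0 r0') r1 ≤ r0 := le_trans (min_le_left _ _) (min_le_left _ _)
      rw [hrdef]; linarith
    have h2r0' : 2*r ≤ r0' := by
      have : min (min r0 r0') r1 ≤ r0' := le_trans (min_le_left _ _) (min_le_right _ _)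
      rw [hrdef]; linarith
    have h2r1 : 2*r ≤ r1 := by
      have : min (min r0 r0') r1 ≤ r1 := min_le_right _ _
      rw [hrdef]; linarith
    have key : ∀ v : Em n, ‖v‖ = 1 → ‖(L - T) v‖ ≤ (6*ε + ε') * (4/3) + ‖L - T‖ * (1/3) := by
      intro v hv
      set B' : Set (Em n) := ball (x + r • v) (r/3) with hB'
      have hrv : ‖r • v‖ = r := by
        rw [norm_smul, hv, mul_one, Real.norm_eq_abs, abs_of_pos hr]
      have hsub1 : B' ⊆ closedBall x (2*r) := by
        intro w hw
        have h1 : dist w (x + r • v) < r/3 := mem_ball.1 hw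
        have h2 : dist (x + r • v) x = r := by
          rw [dist_eq_norm, add_sub_cancel_left, hrv]
        have := dist_triangle w (x + r • v) x
        exact mem_closedBall.2 (by linarith)
      have hsub2 : B' ⊆ ball x (2*r) := by
        intro w hw
        have h1 : dist w (x + r • v) < r/3 := mem_ball.1 hw
        have h2 : dist (x + r • v) x = r := by
          rw [dist_eq_norm, add_sub_cancel_left, hrv]
        have := dist_triangle w (x + r • v) x
        exact mem_ball.2 (by linarith)
      have hvol1 : volume (closedBall x (2*r)) = ENNReal.ofReal ((2*r)^n) * volume (ball (0:Em n) 1) := by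
        rw [Measure.addHaar_closedBall volume x (by linarith), finrank_euclideanSpace_fin]
      have hvol2 : volume (ball x (2*r)) = ENNReal.ofReal ((2*r)^n) * volume (ball (0:Em n) 1) := by
        rw [Measure.addHaar_ball volume x (by linarith), finrank_euclideanSpace_fin]
      have hvol3 : volume B' = ENNReal.ofReal ((r/3)^n) * volume (ball (0:Em n) 1) := by
        rw [hB', Measure.addHaar_ball volume _ (by linarith), finrank_euclideanSpace_fin]
      have hv0 : volume (ball (0 : Em n) 1) ≠ 0 := (measure_ball_pos _ _ one_pos).ne'
      have hvt : volume (ball (0 : Em n) 1) ≠ ⊤ := measure_ball_lt_top.ne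
      have hlt : volume (B' \ t) + volume (B' \ S) < volume B' := by
        have hb1 : volume (B' \ t) ≤ ENNReal.ofReal ηr * volume (closedBall x (2*r)) := by
          refine le_trans (measure_mono ?_) (hr0 (2*r) (by linarith) h2r0)
          exact fun w hw => ⟨hsub1 hw.1, hw.2⟩
        have hb2 : volume (B' \ S) ≤ ENNReal.ofReal ηr * volume (ball x (2*r)) := by
          refine le_trans (measure_mono ?_) (hr0' (2*r) (by linarith) h2r0')
          exact fun w hw => ⟨hsub2 hw.1, hw.2⟩
        calc volume (B' \ t) + volume (B' \ S)
            ≤ ENNReal.ofReal ηr * volume (closedBall x (2*r)) +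
              ENNReal.ofReal ηr * volume (ball x (2*r)) := add_le_add hb1 hb2
          _ = ENNReal.ofReal (ηr * (2*r)^n + ηr * (2*r)^n) * volume (ball (0:Em n) 1) := by
              have hsplit : ENNReal.ofReal (ηr * (2*r)^n + ηr * (2*r)^n)
                  = ENNReal.ofReal ηr * ENNReal.ofReal ((2*r)^n)
                    + ENNReal.ofReal ηr * ENNReal.ofReal ((2*r)^n) := by
                rw [ENNReal.ofReal_add (by positivity) (by positivity),
                  ENNReal.ofReal_mul hηr0.le]
              rw [hvol1, hvol2, hsplit, add_mul]; ring
          _ < volume B' := by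
              rw [hvol3]
              apply ENNReal.mul_lt_mul_left hv0 hvt
              apply (ENNReal.ofReal_lt_ofReal_iff (by positivity)).mpr
              have h6n : (6:ℝ)^n = 2^n * 3^n := by rw [← mul_pow]; norm_num
              have h3n : (0:ℝ) < 3^n := by positivity
              have h2n : (0:ℝ) < 2^n := by positivity
              have hrn : (0:ℝ) < r^n := by positivity
              have e1 : ηr * (2*r)^n + ηr * (2*r)^n = 2^n * r^n / (2 * 6^n) := by
                rw [hηr, mul_pow]; field_simp; ring
              have e2 : (r/3)^n = r^n / 3^n := by rw [div_pow]
              rw [e1, e2, h6n]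
              rw [div_lt_div_iff₀ (by positivity) (by positivity)]
              nlinarith [mul_pos (mul_pos h2n hrn) h3n]
      obtain ⟨y, hyB, hyt, hyS⟩ := find_point' htm hSm hlt
      have hyx : dist y x ≤ 2*r := mem_closedBall.1 (hsub1 hyB)
      have hyn : ‖y - x‖ ≤ 4*r/3 := by
        rw [← dist_eq_norm]
        have h1 : dist y (x + r • v) < r/3 := mem_ball.1 hyB
        have h2 : dist (x + r • v) x = r := by
          rw [dist_eq_norm, add_sub_cancel_left, hrv]
        have := dist_triangle y (x + r • v) x
        linarith
      have hlittle' : ‖f y - f x - L (y - x)‖ ≤ ε' * ‖y - x‖ :=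
        hr1 y hyS (by linarith)
      have happ : ‖f y - f x - T (y - x)‖ ≤ 6*ε * ‖y - x‖ := by
        have := happrox y hyt x hxt
        rwa [hcoe] at this
      have hLT : ‖(L - T) (y - x)‖ ≤ (6*ε + ε') * ‖y - x‖ := by
        have hid : (L - T) (y - x) = (f y - f x - T (y - x)) - (f y - f x - L (y - x)) := by
          simp only [ContinuousLinearMap.sub_apply]; abel
        rw [hid]
        calc ‖(f y - f x - T (y - x)) - (f y - f x - L (y - x))‖
            ≤ ‖f y - f x - T (y - x)‖ + ‖f y - f x - L (y - x)‖ := norm_sub_le _ _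
          _ ≤ 6*ε * ‖y - x‖ + ε' * ‖y - x‖ := add_le_add happ hlittle'
          _ = (6*ε + ε') * ‖y - x‖ := by ring
      have hrv_yx : ‖r • v - (y - x)‖ ≤ r/3 := by
        have h1 : dist y (x + r • v) < r/3 := mem_ball.1 hyB
        rw [dist_eq_norm] at h1
        have : r • v - (y - x) = -(y - (x + r • v)) := by abel
        rw [this, norm_neg]
        linarith
      have hsmul : ‖(L - T) (r • v)‖ = r * ‖(L - T) v‖ := by
        rw [ContinuousLinearMap.map_smul, norm_smul, Real.norm_eq_abs, abs_of_pos hr]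
      have hstep : r * ‖(L - T) v‖ ≤ (6*ε + ε') * (4*r/3) + ‖L - T‖ * (r/3) := by
        rw [← hsmul]
        calc ‖(L - T) (r • v)‖ ≤ ‖(L - T) (y - x)‖ + ‖(L - T) (r • v - (y - x))‖ := by
              have : (L - T) (r • v) = (L - T) (y - x) + (L - T) (r • v - (y - x)) := by
                rw [← map_add]; congr 1; abel
              rw [this]; exact norm_add_le _ _
          _ ≤ (6*ε + ε') * ‖y - x‖ + ‖L - T‖ * ‖r • v - (y - x)‖ :=
              add_le_add hLT ((L - T).le_opNorm _)
          _ ≤ (6*ε + ε') * (4*r/3) + ‖L - T‖ * (r/3) := by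
              apply add_le_add
              · exact mul_le_mul_of_nonneg_left hyn (by linarith)
              · exact mul_le_mul_of_nonneg_left hrv_yx (norm_nonneg _)
      have hstep2 : r * ‖(L - T) v‖ ≤ r * ((6*ε + ε') * (4/3) + ‖L - T‖ * (1/3)) := by
        calc r * ‖(L - T) v‖ ≤ (6*ε + ε') * (4*r/3) + ‖L - T‖ * (r/3) := hstep
          _ = r * ((6*ε + ε') * (4/3) + ‖L - T‖ * (1/3)) := by ring
      exact le_of_mul_le_mul_left hstep2 hr
    have hop : ‖L - T‖ ≤ (6*ε + ε') * (4/3) + ‖L - T‖ * (1/3) :=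
      (L - T).opNorm_le_of_unit_norm (by positivity) key
    linarith
  have h12 : ‖L - T‖ ≤ 12*ε := by
    apply le_of_forall_pos_le_add
    intro δ hδ
    have := main (δ/2) (by linarith)
    linarith
  linarith

lemma select_eps (T : Em n →L[ℝ] Em n) : ∃ ε : ℝ, 0 < ε ∧
    (∀ M : Em n →L[ℝ] Em n, ‖M - T‖ ≤ 14 * ε → |M.det| ≤ |T.det| + 1/2) ∧
    (1 ≤ |T.det| → ∀ (s : Set (Em n)) (g : Em n → Em n),
      ApproximatesLinearOn g T s (6*ε).toNNReal →
        ENNReal.ofReal (|T.det| - 1/2) * volume s ≤ volume (g '' s)) := by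
  have hc : ContinuousAt (fun M : Em n →L[ℝ] Em n => M.det) T :=
    ContinuousLinearMap.continuous_det.continuousAt
  obtain ⟨δ1, hδ1, hδ1'⟩ := Metric.continuousAt_iff.1 hc (1/2) (by norm_num)
  have hdet_of : ∀ ε : ℝ, 0 < ε → 14 * ε < δ1 →
      ∀ M : Em n →L[ℝ] Em n, ‖M - T‖ ≤ 14 * ε → |M.det| ≤ |T.det| + 1/2 := by
    intro ε hε hεδ M hM
    have h1 : dist M T < δ1 := by rw [dist_eq_norm]; linarith
    have h2 : dist M.det T.det < 1/2 := hδ1' h1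
    rw [Real.dist_eq] at h2
    have := abs_sub_abs_le_abs_sub M.det T.det
    linarith [abs_sub_abs_le_abs_sub M.det T.det]
  by_cases hdet : 1 ≤ |T.det|
  · have hm : (((|T.det| - 1/2).toNNReal : ℝ≥0) : ℝ≥0∞) < ENNReal.ofReal |T.det| := by
      have : ENNReal.ofReal (|T.det| - 1/2) < ENNReal.ofReal |T.det| :=
        (ENNReal.ofReal_lt_ofReal_iff (by linarith)).2 (by linarith)
      exact this
    have hev := MeasureTheory.mul_le_addHaar_image_of_lt_det volume T hm
    obtain ⟨a, ha0, hIoo⟩ := mem_nhdsGT_iff_exists_Ioo_subset.1 hev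
    refine ⟨min (δ1/28) ((a:ℝ)/12), ?_, ?_, ?_⟩
    · have : (0:ℝ) < (a:ℝ) := ha0
      apply lt_min (by linarith) (by linarith)
    · apply hdet_of
      · have : (0:ℝ) < (a:ℝ) := ha0
        apply lt_min (by linarith) (by linarith)
      · have h1 : min (δ1/28) ((a:ℝ)/12) ≤ δ1/28 := min_le_left _ _
        linarith
    · intro _ s g happ
      set ε := min (δ1/28) ((a:ℝ)/12) with hε
      have hεpos : (0:ℝ) < ε := by
        have : (0:ℝ) < (a:ℝ) := ha0
        apply lt_min (by linarith) (by linarith)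
      have hmem : (6*ε).toNNReal ∈ Ioo (0:ℝ≥0) a := by
        constructor
        · exact Real.toNNReal_pos.2 (by linarith)
        · have h1 : ε ≤ (a:ℝ)/12 := min_le_right _ _
          have h2 : ((6*ε).toNNReal : ℝ) = 6*ε := Real.coe_toNNReal _ (by linarith)
          rw [← NNReal.coe_lt_coe, h2]
          have : (0:ℝ) < (a:ℝ) := ha0
          linarith
      have := hIoo hmem s g happ
      have hcoe : (((|T.det| - 1/2).toNNReal : ℝ≥0) : ℝ≥0∞) = ENNReal.ofReal (|T.det| - 1/2) := rfl
      rwa [hcoe] at this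
  · refine ⟨δ1/28, by linarith, hdet_of _ (by linarith) (by linarith), fun h => absurd h hdet⟩

theorem stmt7 {n : ℕ} (Ω : Set (Em n)) (hΩ : IsOpen Ω)
    (f : Em n → Em n) (hf : IsHomeoOnto f Ω)
    (Df : Em n → Em n →L[ℝ] Em n)
    (hDf : ∀ᵐ x ∂(volume.restrict Ω), HasApproxDerivAt f (Df x) x) :
    ∀ K ⊆ Ω, IsCompact K → ∫⁻ x in K, ENNReal.ofReal |(Df x).det| < ∞ := by
  classical
  intro K hKΩ hK
  have hcont : ContinuousOn f Ω := continuousOn_iff_continuous_restrict.mpr hf.continuous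
  have hinj : InjOn f Ω := Set.injOn_iff_injective.mpr hf.injective
  have hfK : IsCompact (f '' K) := hK.image_of_continuousOn (hcont.mono hKΩ)
  rcases Nat.eq_zero_or_pos n with hn0 | hn0
  · subst hn0
    haveI : Subsingleton (Em 0) := ⟨fun a b => (WithLp.ext_iff _).2 (funext fun i => i.elim0)⟩
    rcases K.eq_empty_or_nonempty with rfl | ⟨x₀, _⟩
    · simp
    · have hconst : (fun x => ENNReal.ofReal |(Df x).det|) =
          fun _ => ENNReal.ofReal |(Df x₀).det| := funext fun x => by
        rw [Subsingleton.elim x x₀]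
      rw [show (∫⁻ x in K, ENNReal.ofReal |(Df x).det|)
          = ∫⁻ _ in K, ENNReal.ofReal |(Df x₀).det| from by rw [hconst]]
      rw [setLIntegral_const]
      exact ENNReal.mul_lt_top ENNReal.ofReal_lt_top hK.measure_lt_top
  haveI : Nontrivial (Em n) := by
    apply Module.nontrivial_of_finrank_pos (R := ℝ)
    rw [finrank_euclideanSpace_fin]; exact hn0
  -- extract a full-measure measurable set of approximate differentiability
  have hΩm : MeasurableSet Ω := hΩ.measurableSet
  have hbad : volume.restrict Ω {x | ¬ HasApproxDerivAt f (Df x) x} = 0 := ae_iff.1 hDf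
  set N := toMeasurable (volume.restrict Ω) {x | ¬ HasApproxDerivAt f (Df x) x} with hN
  have hNm : MeasurableSet N := measurableSet_toMeasurable _ _
  have hNμ : volume (N ∩ Ω) = 0 := by
    have h1 : volume.restrict Ω N = 0 := by rw [hN, measure_toMeasurable]; exact hbad
    rwa [Measure.restrict_apply hNm] at h1
  set A := Ω \ N with hAdef
  have hAm : MeasurableSet A := hΩm.diff hNm
  have hAsub : A ⊆ Ω := diff_subset
  have hAae : volume (Ω \ A) = 0 := by
    refine measure_mono_null (fun x hx => ?_) hNμ
    rcases hx with ⟨hxΩ, hxA⟩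
    by_cases hxN : x ∈ N
    · exact ⟨hxN, hxΩ⟩
    · exact absurd ⟨hxΩ, hxN⟩ hxA
  have hAprop' : ∀ x ∈ A, ∃ S : Set (Em n), MeasurableSet S ∧
      Tendsto (fun r : ℝ => volume (S ∩ Metric.ball x r) / volume (Metric.ball x r))
        (𝓝[>] (0 : ℝ)) (𝓝 1) ∧
      Tendsto (fun y => ‖f y - f x - Df x (y - x)‖ / ‖y - x‖) (𝓝[S \ {x}] x) (𝓝 0) := by
    intro x hx
    have h : HasApproxDerivAt f (Df x) x := by
      by_contra h
      exact hx.2 (subset_toMeasurable _ _ h)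
    exact h
  choose! Sf hSfm hSfd hSfl using hAprop'
  set Stot : Em n → Set (Em n) := fun x => if x ∈ A then Sf x else univ with hStot
  have hStotm : ∀ x, MeasurableSet (Stot x) := fun x => by
    rw [hStot]; dsimp only; split_ifs with hx
    · exact hSfm x hx
    · exact MeasurableSet.univ
  have hStoteq : ∀ x ∈ A, Stot x = Sf x := fun x hx => by
    rw [hStot]; simp [hx]
  -- parameter selection and Lindelöf cover of matrix space
  choose εT hεpos hεdet hεimg using fun T : Em n →L[ℝ] Em n => select_eps T
  obtain ⟨C, hCc, hCcov⟩ := TopologicalSpace.isOpen_iUnion_countable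
    (fun T : Em n →L[ℝ] Em n => ball T (εT T)) (fun T => isOpen_ball)
  have hCuniv : ∀ M : Em n →L[ℝ] Em n, ∃ T ∈ C, dist M T < εT T := by
    intro M
    have hM : M ∈ ⋃ T ∈ C, ball T (εT T) := by
      rw [hCcov]; exact mem_iUnion.2 ⟨M, mem_ball_self (hεpos M)⟩
    rcases mem_iUnion₂.1 hM with ⟨T, hT, hball⟩
    exact ⟨T, hT, mem_ball.1 hball⟩
  obtain ⟨D₀, hD₀c, hD₀d⟩ := TopologicalSpace.exists_countable_dense (Em n)
  haveI := hCc.to_subtype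
  haveI := hD₀c.to_subtype
  -- the pieces
  set piece : (Em n →L[ℝ] Em n) → ℕ → Em n → Set (Em n) := fun T k c =>
    closure (Piece f Df Stot T (εT T) (3/(k+1)) ∩ closedBall c ((3/(k+1))/6)) ∩ Ω with hpiece
  have hcov : ∀ x ∈ A, ∃ T ∈ C, ∃ k : ℕ, ∃ c ∈ D₀, x ∈ piece T k c := by
    intro x hx
    obtain ⟨T, hTC, hTd⟩ := hCuniv (Df x)
    have hσ : (0:ℝ≥0∞) < sgm n := ENNReal.ofReal_pos.2 (by positivity)
    obtain ⟨r0, hr00, hr0⟩ := density_quant (hSfm x hx) (ball x)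
      (fun r hr => (measure_ball_pos _ _ hr).ne') (fun r _ => measure_ball_lt_top.ne)
      (hSfd x hx) hσ
    obtain ⟨r1, hr10, hr1⟩ := littleO_quant (hSfl x hx) (hεpos T)
    obtain ⟨k, hk⟩ := exists_nat_gt (3 / min r0 r1)
    have hmin : 0 < min r0 r1 := lt_min hr00 hr10
    have hkk : (3:ℝ)/(k+1) ≤ min r0 r1 := by
      rw [div_le_iff₀ (by positivity)]
      rw [div_lt_iff₀ hmin] at hk
      nlinarith [hmin.le]
    obtain ⟨c, hcmem⟩ := Metric.dense_iff.1 hD₀d x ((3/(k+1))/6) (by positivity)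
    refine ⟨T, hTC, k, c, hcmem.2, ?_⟩
    rw [hpiece]
    refine ⟨subset_closure ⟨⟨?_, ?_, ?_⟩, ?_⟩, hAsub hx⟩
    · rw [← dist_eq_norm]; exact hTd.le
    · intro r hr hrle
      rw [hStoteq x hx]
      exact hr0 r hr (hrle.trans (hkk.trans (min_le_left _ _)))
    · intro w hw hwd
      rw [hStoteq x hx] at hw
      exact hr1 w hw (hwd.trans (hkk.trans (min_le_right _ _)))
    · have : dist c x < (3/(k+1))/6 := mem_ball.1 hcmem.1
      rw [mem_closedBall, dist_comm]
      exact this.le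
  -- enumerate the pieces by ℕ
  have hNEC : C.Nonempty := by
    obtain ⟨T, hT, _⟩ := hCuniv 0; exact ⟨T, hT⟩
  have hNED : D₀.Nonempty := hD₀d.nonempty
  haveI : Nonempty (↥C × ℕ × ↥D₀) :=
    ⟨⟨⟨hNEC.choose, hNEC.choose_spec⟩, 0, ⟨hNED.choose, hNED.choose_spec⟩⟩⟩
  obtain ⟨e, he⟩ := exists_surjective_nat (↥C × ℕ × ↥D₀)
  set u : ℕ → Set (Em n) := fun j =>
    piece ((e j).1 : Em n →L[ℝ] Em n) (e j).2.1 ((e j).2.2 : Em n) with hu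
  set t : ℕ → Set (Em n) := disjointed u with ht
  have hum : ∀ j, MeasurableSet (u j) := fun j => by
    rw [hu]; exact (isClosed_closure.measurableSet).inter hΩm
  have htm : ∀ j, MeasurableSet (t j) := by
    rw [ht]; exact MeasurableSet.disjointed hum
  have htd : Pairwise (Function.onFun Disjoint t) := by rw [ht]; exact disjoint_disjointed u
  have htsub : ∀ j, t j ⊆ u j := by rw [ht]; exact disjointed_subset u
  have huΩ : ∀ j, u j ⊆ Ω := fun j => by rw [hu, hpiece]; exact inter_subset_right
  have hcovA : A ⊆ ⋃ j, t j := by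
    intro x hx
    rw [ht, iUnion_disjointed]
    obtain ⟨T, hTC, k, c, hcD, hmem⟩ := hcov x hx
    obtain ⟨j, hj⟩ := he (⟨T, hTC⟩, k, ⟨c, hcD⟩)
    refine mem_iUnion.2 ⟨j, ?_⟩
    rw [hu]; dsimp only; rw [hj]
    exact hmem
  have happrox : ∀ j, ApproximatesLinearOn f ((e j).1 : Em n →L[ℝ] Em n) (t j)
      (6 * εT ((e j).1 : Em n →L[ℝ] Em n)).toNNReal := by
    intro j
    have h1 := piece_closure_approx (f := f) (Df := Df) hStotm
      (T := ((e j).1 : Em n →L[ℝ] Em n)) (ε := εT ((e j).1 : Em n →L[ℝ] Em n))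
      (R := 3/((e j).2.1+1)) (hεpos _).le hΩ hcont ((e j).2.2 : Em n)
    refine h1.mono_set ?_
    intro x hx
    have := htsub j hx
    rwa [hu, hpiece] at this
  have haeb : ∀ j, ∀ᵐ x ∂(volume : Measure (Em n)), x ∈ t j → x ∈ A →
      ENNReal.ofReal |(Df x).det| ≤
        ENNReal.ofReal (|((e j).1 : Em n →L[ℝ] Em n).det| + 1/2) := by
    intro j
    filter_upwards [Besicovitch.ae_tendsto_measure_inter_div_of_measurableSet volume (htm j)]
      with x hx hxt hxA
    have hdens : Tendsto (fun r => volume (t j ∩ closedBall x r) / volume (closedBall x r))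
        (𝓝[>] (0:ℝ)) (𝓝 1) := by
      rwa [Set.indicator_of_mem hxt, Pi.one_apply] at hx
    have hnorm := density_point_norm_le (hεpos _) (happrox j) hxt (htm j) hdens
      (hSfm x hxA) (hSfd x hxA) (hSfl x hxA)
    exact ENNReal.ofReal_le_ofReal (hεdet _ _ hnorm)
  -- assembling the integral bound
  have hKm : MeasurableSet K := hK.measurableSet
  have hjunk : volume (K \ ⋃ j, t j) = 0 := by
    refine measure_mono_null (fun x hx => ?_) hAae
    exact ⟨hKΩ hx.1, fun hxA => hx.2 (hcovA hxA)⟩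
  have hmeas_le : volume.restrict K ≤
      Measure.sum (fun j => volume.restrict (t j ∩ K)) + volume.restrict (K \ ⋃ j, t j) := by
    refine Measure.le_iff.2 fun E hE => ?_
    rw [Measure.add_apply, Measure.sum_apply _ hE, Measure.restrict_apply hE]
    simp only [Measure.restrict_apply hE]
    have hsub : E ∩ K ⊆ (⋃ j, E ∩ (t j ∩ K)) ∪ (E ∩ (K \ ⋃ j, t j)) := by
      intro x hx
      by_cases hxt : x ∈ ⋃ j, t j
      · rcases mem_iUnion.1 hxt with ⟨j, hj⟩
        exact Or.inl (mem_iUnion.2 ⟨j, hx.1, hj, hx.2⟩)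
      · exact Or.inr ⟨hx.1, hx.2, hxt⟩
    calc volume (E ∩ K) ≤ volume ((⋃ j, E ∩ (t j ∩ K)) ∪ (E ∩ (K \ ⋃ j, t j))) :=
          measure_mono hsub
      _ ≤ volume (⋃ j, E ∩ (t j ∩ K)) + volume (E ∩ (K \ ⋃ j, t j)) := measure_union_le _ _
      _ ≤ (∑' j, volume (E ∩ (t j ∩ K))) + volume (E ∩ (K \ ⋃ j, t j)) :=
          add_le_add_left (measure_iUnion_le _) _
  have hstep1 : ∫⁻ x in K, ENNReal.ofReal |(Df x).det| ≤
      ∑' j, ∫⁻ x in t j ∩ K, ENNReal.ofReal |(Df x).det| := by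
    calc ∫⁻ x in K, ENNReal.ofReal |(Df x).det|
        ≤ ∫⁻ x, ENNReal.ofReal |(Df x).det|
            ∂(Measure.sum (fun j => volume.restrict (t j ∩ K)) +
              volume.restrict (K \ ⋃ j, t j)) := lintegral_mono' hmeas_le le_rfl
      _ = (∑' j, ∫⁻ x in t j ∩ K, ENNReal.ofReal |(Df x).det|) +
            ∫⁻ x, ENNReal.ofReal |(Df x).det| ∂(volume.restrict (K \ ⋃ j, t j)) := by
          rw [lintegral_add_measure, lintegral_sum_measure]
      _ = ∑' j, ∫⁻ x in t j ∩ K, ENNReal.ofReal |(Df x).det| := by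
          rw [Measure.restrict_eq_zero.2 hjunk, lintegral_zero_measure, add_zero]
  have hstep2 : ∀ j, ∫⁻ x in t j ∩ K, ENNReal.ofReal |(Df x).det| ≤
      ENNReal.ofReal (3/2) * volume (t j ∩ K) + 3 * volume (f '' (t j ∩ K)) := by
    intro j
    set T := ((e j).1 : Em n →L[ℝ] Em n) with hT
    have hae2 : ∀ᵐ x ∂volume.restrict (t j ∩ K),
        ENNReal.ofReal |(Df x).det| ≤ ENNReal.ofReal (|T.det| + 1/2) := by
      have h1 : ∀ᵐ x ∂volume.restrict (t j ∩ K), x ∈ t j ∩ K :=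
        ae_restrict_mem ((htm j).inter hKm)
      have h2 := ae_restrict_of_ae (μ := (volume : Measure (Em n))) (s := t j ∩ K) (haeb j)
      have h3 := ae_restrict_of_ae (μ := (volume : Measure (Em n))) (s := t j ∩ K)
        (measure_eq_zero_iff_ae_notMem.1 hAae)
      filter_upwards [h1, h2, h3] with x hx hbx hnx
      refine hbx hx.1 ?_
      by_contra hxA
      exact hnx ⟨huΩ j (htsub j hx.1), hxA⟩
    have hb1 : ∫⁻ x in t j ∩ K, ENNReal.ofReal |(Df x).det| ≤
        ENNReal.ofReal (|T.det| + 1/2) * volume (t j ∩ K) := by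
      calc ∫⁻ x in t j ∩ K, ENNReal.ofReal |(Df x).det|
          ≤ ∫⁻ _ in t j ∩ K, ENNReal.ofReal (|T.det| + 1/2) := lintegral_mono_ae hae2
        _ = ENNReal.ofReal (|T.det| + 1/2) * volume (t j ∩ K) := setLIntegral_const _ _
    by_cases hd1 : 1 ≤ |T.det|
    · have himg : ENNReal.ofReal (|T.det| - 1/2) * volume (t j ∩ K) ≤
          volume (f '' (t j ∩ K)) :=
        hεimg T hd1 _ f ((happrox j).mono_set inter_subset_left)
      have hc3 : ENNReal.ofReal (|T.det| + 1/2) ≤ 3 * ENNReal.ofReal (|T.det| - 1/2) := by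
        rw [show (3:ℝ≥0∞) = ENNReal.ofReal 3 by simp, ← ENNReal.ofReal_mul (by norm_num)]
        exact ENNReal.ofReal_le_ofReal (by linarith)
      calc ∫⁻ x in t j ∩ K, ENNReal.ofReal |(Df x).det|
          ≤ ENNReal.ofReal (|T.det| + 1/2) * volume (t j ∩ K) := hb1
        _ ≤ 3 * ENNReal.ofReal (|T.det| - 1/2) * volume (t j ∩ K) :=
            mul_le_mul_left hc3 _
        _ = 3 * (ENNReal.ofReal (|T.det| - 1/2) * volume (t j ∩ K)) := by ring
        _ ≤ 3 * volume (f '' (t j ∩ K)) := mul_le_mul_right himg _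
        _ ≤ _ := le_add_self
    · push_neg at hd1
      have hle : ENNReal.ofReal (|T.det| + 1/2) ≤ ENNReal.ofReal (3/2) :=
        ENNReal.ofReal_le_ofReal (by linarith)
      calc ∫⁻ x in t j ∩ K, ENNReal.ofReal |(Df x).det|
          ≤ ENNReal.ofReal (|T.det| + 1/2) * volume (t j ∩ K) := hb1
        _ ≤ ENNReal.ofReal (3/2) * volume (t j ∩ K) := mul_le_mul_left hle _
        _ ≤ _ := le_add_right le_rfl
  have htd' : Pairwise (Function.onFun Disjoint fun j => t j ∩ K) := fun i j hij =>
    (htd hij).mono inter_subset_left inter_subset_left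
  have hsum1 : ∑' j, volume (t j ∩ K) ≤ volume K := by
    rw [← measure_iUnion htd' (fun j => (htm j).inter hKm)]
    exact measure_mono (iUnion_subset fun j => inter_subset_right)
  have hsubΩ : ∀ j, t j ∩ K ⊆ Ω := fun j x hx => huΩ j (htsub j hx.1)
  have himgmeas : ∀ j, MeasurableSet (f '' (t j ∩ K)) := fun j =>
    ((htm j).inter hKm).image_of_continuousOn_injOn
      (hcont.mono (hsubΩ j)) (hinj.mono (hsubΩ j))
  have himgdisj : Pairwise (Function.onFun Disjoint fun j => f '' (t j ∩ K)) := by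
    intro i j hij
    have h1 : Disjoint (t i ∩ K) (t j ∩ K) := htd' hij
    simp only [Function.onFun]
    rw [Set.disjoint_iff_inter_eq_empty, ← hinj.image_inter (hsubΩ i) (hsubΩ j),
      Set.disjoint_iff_inter_eq_empty.1 h1, image_empty]
  have hsum2 : ∑' j, volume (f '' (t j ∩ K)) ≤ volume (f '' K) := by
    rw [← measure_iUnion himgdisj himgmeas]
    refine measure_mono ?_
    rw [← image_iUnion]
    exact image_mono (f := f) (iUnion_subset fun j => inter_subset_right)
  calc ∫⁻ x in K, ENNReal.ofReal |(Df x).det|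
      ≤ ∑' j, ∫⁻ x in t j ∩ K, ENNReal.ofReal |(Df x).det| := hstep1
    _ ≤ ∑' j, (ENNReal.ofReal (3/2) * volume (t j ∩ K) + 3 * volume (f '' (t j ∩ K))) :=
        ENNReal.tsum_le_tsum hstep2
    _ = ENNReal.ofReal (3/2) * (∑' j, volume (t j ∩ K)) +
          3 * ∑' j, volume (f '' (t j ∩ K)) := by
        rw [ENNReal.tsum_add, ENNReal.tsum_mul_left, ENNReal.tsum_mul_left]
    _ ≤ ENNReal.ofReal (3/2) * volume K + 3 * volume (f '' K) :=
        add_le_add (mul_le_mul_right hsum1 _) (mul_le_mul_right hsum2 _)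
    _ < ∞ := by
        apply ENNReal.add_lt_top.2
        constructor
        · exact ENNReal.mul_lt_top ENNReal.ofReal_lt_top hK.measure_lt_top
        · exact ENNReal.mul_lt_top (by simp) hfK.measure_lt_top
end
end
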